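/- arXiv:1709.05510 — 8 statements merged into one kernel-verified Lean document; each statement's English description precedes it below -/
import Mathlib

section
/- Let x_u, x_v ∈ [0,1], let x = d_L(x_u, x_v), and let r ∈ [0, 1/2]. If x ≤ 2r and x + 2r ≤ 1, then the Lebesgue measure of the set {z ∈ [0,1] : d_L(z, x_u) ≤ r and d_L(z, x_v) ≤ r} equals 2r − x. If x > 2r, then this set has Lebesgue measure 0. -/
open MeasureTheory

/-- The circular distance on `[0,1]`. -/
noncomputable def dL (x y : ℝ) : ℝ := min |x - y| (1 - |x - y|)

/-!
Reducing mod 1 identifies `[0,1]` with the circle `ℝ/ℤ` up to a null set: Lebesgue measure becomes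
Haar measure and `dL` becomes the quotient metric. The set in question is then the intersection of
two closed arcs of radius `r` whose centres are `d = dL xu xv` apart. If `2r < d` the arcs are
disjoint by the triangle inequality. If `d ≤ 2r`, their union is the arc of radius `r + d/2` about
the midpoint, of length `2r + d` as long as `2r + d ≤ 1`, and inclusion–exclusion leaves
`2r + 2r - (2r + d) = 2r - d`.
-/

open Metric Set

theorem abs_add_le_or_abs_sub_le_of_abs_le_add_abs {w h r : ℝ} (hh : |h| ≤ r)
    (hw : |w| ≤ r + |h|) : |w + h| ≤ r ∨ |w - h| ≤ r := by
  rw [abs_le, abs_le]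
  rw [abs_le] at hw
  rcases abs_cases h with ⟨hh', _⟩ | ⟨hh', _⟩ <;> rw [hh'] at hh hw <;>
    rcases le_total 0 w with hw' | hw'
  all_goals first
    | exact Or.inl ⟨by linarith, by linarith⟩
    | exact Or.inr ⟨by linarith, by linarith⟩

namespace AddCircle

variable {T : ℝ}

theorem norm_coe_le_abs (s : ℝ) : ‖(s : AddCircle T)‖ ≤ |s| :=
  QuotientAddGroup.norm_mk_le_norm

theorem norm_coe_abs (t : ℝ) : ‖((|t| : ℝ) : AddCircle T)‖ = ‖(t : AddCircle T)‖ := by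
  rcases abs_choice t with h | h <;> rw [h]
  rw [coe_neg, norm_neg]

theorem exists_coe_eq_and_abs_eq_norm (u : AddCircle T) :
    ∃ s : ℝ, (s : AddCircle T) = u ∧ |s| = ‖u‖ := by
  obtain ⟨s, rfl⟩ := QuotientAddGroup.mk_surjective u
  refine ⟨s - round (T⁻¹ * s) * T, ?_, (norm_eq T).symm⟩
  simp [← zsmul_eq_mul, coe_period]

theorem closedBall_sub_union_closedBall_add (m : AddCircle T) {h r : ℝ} (hh : |h| ≤ r) :
    closedBall (m - h) r ∪ closedBall (m + h) r = closedBall m (r + |h|) := by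
  ext z
  obtain ⟨w, hw, hw_norm⟩ := exists_coe_eq_and_abs_eq_norm (z - m)
  obtain rfl : z = ↑w + m := by rw [hw]; abel
  rw [add_sub_cancel_right] at hw_norm
  have hwh : ↑w + m - (m - ↑h) = ((w + h : ℝ) : AddCircle T) := by rw [coe_add]; abel
  have hwh' : ↑w + m - (m + ↑h) = ((w - h : ℝ) : AddCircle T) := by rw [coe_sub]; abel
  simp only [mem_union, mem_closedBall, dist_eq_norm, hwh, hwh', add_sub_cancel_right]
  constructor
  · rintro (hle | hle)
    · calc ‖(w : AddCircle T)‖ = ‖((w + h : ℝ) : AddCircle T) - h‖ := by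
            rw [coe_add, add_sub_cancel_right]
        _ ≤ r + |h| := (norm_sub_le _ _).trans (add_le_add hle (norm_coe_le_abs h))
    · calc ‖(w : AddCircle T)‖ = ‖((w - h : ℝ) : AddCircle T) + h‖ := by
            rw [coe_sub, sub_add_cancel]
        _ ≤ r + |h| := (norm_add_le _ _).trans (add_le_add hle (norm_coe_le_abs h))
  · rw [← hw_norm]
    intro hle
    exact (abs_add_le_or_abs_sub_le_of_abs_le_add_abs hh hle).imp
      (norm_coe_le_abs _).trans (norm_coe_le_abs _).trans

variable [hT : Fact (0 < T)]

theorem norm_coe_eq_min {t : ℝ} (ht : |t| ≤ T) : ‖(t : AddCircle T)‖ = min |t| (T - |t|) := by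
  have hT' : |T| = T := abs_of_pos hT.out
  rw [← norm_coe_abs]
  rcases le_total |t| (T / 2) with h | h
  · rw [(norm_coe_eq_abs_iff T hT.out.ne').2 (by rwa [abs_abs, hT']), abs_abs,
      min_eq_left (by linarith)]
  · have hwrap : ((|t| : ℝ) : AddCircle T) = ↑(|t| - T) := by
      simpa only [sub_add_cancel] using coe_add_period T (|t| - T)
    rw [hwrap, ← norm_coe_abs, abs_of_nonpos (by linarith),
      (norm_coe_eq_abs_iff T hT.out.ne').2 (by rw [abs_of_nonneg (by linarith), hT']; linarith),
      abs_of_nonneg (by linarith), min_eq_right (by linarith)]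
    ring

theorem volume_Icc_inter_preimage_coe (t : ℝ) {U : Set (AddCircle T)} (hU : MeasurableSet U) :
    volume (Icc t (t + T) ∩ (↑) ⁻¹' U) = volume U := by
  rw [add_projection_respects_measure T t hU, inter_comm]
  exact measure_congr ((ae_eq_refl _).inter Ioc_ae_eq_Icc).symm

theorem volume_closedBall_inter_closedBall {a b : AddCircle T} {r : ℝ}
    (h₁ : dist a b ≤ 2 * r) (h₂ : dist a b + 2 * r ≤ T) :
    volume (closedBall a r ∩ closedBall b r) = ENNReal.ofReal (2 * r - dist a b) := by
  have hd0 : 0 ≤ dist a b := dist_nonneg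
  obtain ⟨s, hs, hs_norm⟩ := exists_coe_eq_and_abs_eq_norm (b - a)
  have hd : |s / 2| = dist a b / 2 := by
    rw [abs_div, hs_norm, ← dist_eq_norm, dist_comm, abs_two]
  have hunion := closedBall_sub_union_closedBall_add (a + ((s / 2 : ℝ) : AddCircle T)) (r := r)
    (by rw [hd]; linarith)
  rw [add_sub_cancel_right, add_assoc, ← coe_add, add_halves, hs, add_sub_cancel, hd] at hunion
  have key := measure_union_add_inter (μ := volume) (closedBall a r)
    (measurableSet_closedBall (x := b) (ε := r))
  rw [hunion, volume_closedBall, volume_closedBall, volume_closedBall, min_eq_right (by linarith),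
    min_eq_right (by linarith), ← ENNReal.ofReal_add (by linarith) (by linarith),
    show 2 * r + 2 * r = 2 * (r + dist a b / 2) + (2 * r - dist a b) by ring,
    ENNReal.ofReal_add (by linarith) (by linarith)] at key
  exact (ENNReal.add_right_inj ENNReal.ofReal_ne_top).mp key

end AddCircle

theorem dL_eq_dist_coe {x y : ℝ} (hx : x ∈ Icc (0 : ℝ) 1) (hy : y ∈ Icc (0 : ℝ) 1) :
    dL x y = dist (x : UnitAddCircle) y := by
  rw [dist_eq_norm, ← AddCircle.coe_sub,
    AddCircle.norm_coe_eq_min (abs_sub_le_of_nonneg_of_le hx.1 hx.2 hy.1 hy.2), dL]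

theorem gbm_common_neighbor_measure_same_general (xu xv r : ℝ)
    (hxu : xu ∈ Set.Icc (0 : ℝ) 1) (hxv : xv ∈ Set.Icc (0 : ℝ) 1) :
    (dL xu xv ≤ 2 * r ∧ dL xu xv + 2 * r ≤ 1 →
      volume {z : ℝ | z ∈ Set.Icc (0 : ℝ) 1 ∧ dL z xu ≤ r ∧ dL z xv ≤ r}
        = ENNReal.ofReal (2 * r - dL xu xv)) ∧
    (2 * r < dL xu xv →
      volume {z : ℝ | z ∈ Set.Icc (0 : ℝ) 1 ∧ dL z xu ≤ r ∧ dL z xv ≤ r} = 0) := by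
  have hS : {z : ℝ | z ∈ Icc (0 : ℝ) 1 ∧ dL z xu ≤ r ∧ dL z xv ≤ r} =
      Icc 0 (0 + 1) ∩ (↑) ⁻¹' (closedBall (xu : UnitAddCircle) r ∩ closedBall ↑xv r) := by
    ext z
    simp only [zero_add, mem_ofPred_eq, mem_inter_iff, mem_preimage, mem_closedBall]
    exact and_congr_right fun hz => by rw [dL_eq_dist_coe hz hxu, dL_eq_dist_coe hz hxv]
  rw [hS, AddCircle.volume_Icc_inter_preimage_coe 0
    (measurableSet_closedBall.inter measurableSet_closedBall), dL_eq_dist_coe hxu hxv]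
  refine ⟨fun h => AddCircle.volume_closedBall_inter_closedBall h.1 h.2, fun h => ?_⟩
  rw [(closedBall_disjoint_closedBall (by linarith)).inter_eq, measure_empty]

/-- measure of the set of common neighbors of two same-cluster
points at circular distance `x`, for radius `r`. -/
theorem gbm_common_neighbor_measure_same (xu xv r : ℝ)
    (hxu : xu ∈ Set.Icc (0 : ℝ) 1) (hxv : xv ∈ Set.Icc (0 : ℝ) 1)
    (hr : r ∈ Set.Icc (0 : ℝ) (1 / 2)) :
    (dL xu xv ≤ 2 * r ∧ dL xu xv + 2 * r ≤ 1 →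
      volume {z : ℝ | z ∈ Set.Icc (0 : ℝ) 1 ∧ dL z xu ≤ r ∧ dL z xv ≤ r}
        = ENNReal.ofReal (2 * r - dL xu xv)) ∧
    (2 * r < dL xu xv →
      volume {z : ℝ | z ∈ Set.Icc (0 : ℝ) 1 ∧ dL z xu ≤ r ∧ dL z xv ≤ r} = 0) :=
  gbm_common_neighbor_measure_same_general xu xv r hxu hxv
end

section
/- Let x_u, x_v ∈ [0,1], let x = d_L(x_u, x_v), and let 0 ≤ r_d ≤ r_s. If x ≤ r_s + r_d and x + r_s + r_d ≤ 1, then the Lebesgue measure of the set {z ∈ [0,1] : d_L(z, x_u) ≤ r_s and d_L(z, x_v) ≤ r_d} equals min(2r_d, r_s + r_d − x). In particular, if additionally x ≤ r_d and r_s > 2r_d, this measure equals 2r_d. -/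
open MeasureTheory

open Set in
lemma dL_shift (z c s : ℝ) : dL (z + s) (c + s) = dL z c := by
  unfold dL; rw [show z + s - (c + s) = z - c by ring]

lemma dL_shift' (z s c C : ℝ) (h : C = c + s) : dL (z + s) C = dL z c := by
  rw [h]; exact dL_shift z c s

lemma dL_comm (a b : ℝ) : dL a b = dL b a := by unfold dL; rw [abs_sub_comm]

lemma dL_sub_one_left (z c : ℝ) (h1 : c ≤ z) (h2 : z ≤ c + 1) : dL (z - 1) c = dL z c := by
  unfold dL
  rw [show z - 1 - c = -(1 - (z - c)) by ring, abs_neg,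
    abs_of_nonneg (by linarith : (0:ℝ) ≤ 1 - (z - c)),
    abs_of_nonneg (by linarith : (0:ℝ) ≤ z - c),
    show 1 - (1 - (z - c)) = z - c by ring]
  exact min_comm _ _

lemma dL_sub_one_right (z c : ℝ) (h1 : z ≤ c) (h2 : c ≤ z + 1) : dL z (c - 1) = dL z c := by
  rw [dL_comm, dL_sub_one_left c z h1 h2, dL_comm]

lemma dL_one_sub (z c : ℝ) : dL (1 - z) c = dL z (1 - c) := by
  unfold dL; rw [show (1:ℝ) - z - c = -(z - (1 - c)) by ring, abs_neg]

lemma meas_pair (a b r1 r2 : ℝ) : MeasurableSet {z : ℝ | dL z a ≤ r1 ∧ dL z b ≤ r2} := by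
  have hc : ∀ c : ℝ, Continuous fun z : ℝ => dL z c := by
    intro c; unfold dL; fun_prop
  exact ((isClosed_le (hc a) continuous_const).measurableSet).inter
    ((isClosed_le (hc b) continuous_const).measurableSet)

lemma vol_between {u s : Set ℝ} (w : Set ℝ) (h1 : u ⊆ s) (h2 : s ⊆ u ∪ w)
    (hw : volume w = 0) : volume s = volume u := by
  refine le_antisymm ?_ (measure_mono h1)
  calc volume s ≤ volume (u ∪ w) := measure_mono h2
    _ ≤ volume u + volume w := measure_union_le u w
    _ = volume u := by rw [hw, add_zero]

open Set in
lemma rot (Q R : ℝ → Prop) (hQ : MeasurableSet {z | Q z})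
    (t : ℝ) (ht0 : 0 ≤ t) (ht1 : t ≤ 1)
    (heq1 : ∀ z, 0 ≤ z → z ≤ 1 - t → (R z ↔ Q (z + t)))
    (heq2 : ∀ z, 1 - t < z → z ≤ 1 → (R z ↔ Q (z + t - 1))) :
    volume {z : ℝ | z ∈ Icc (0:ℝ) 1 ∧ R z} = volume {z : ℝ | z ∈ Icc (0:ℝ) 1 ∧ Q z} := by
  have e1 : {z : ℝ | z ∈ Icc (0:ℝ) 1 ∧ R z}
      = ((· + t) ⁻¹' {w : ℝ | w ∈ Icc t 1 ∧ Q w})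
        ∪ ((· + (t - 1)) ⁻¹' {w : ℝ | w ∈ Ioc 0 t ∧ Q w}) := by
    ext z
    simp only [mem_union, mem_preimage, mem_setOf_eq, mem_Icc, mem_Ioc]
    constructor
    · rintro ⟨⟨h0, h1'⟩, hr⟩
      rcases le_or_gt z (1 - t) with h | h
      · exact Or.inl ⟨⟨by linarith, by linarith⟩, (heq1 z h0 h).mp hr⟩
      · refine Or.inr ⟨⟨by linarith, by linarith⟩, ?_⟩
        have := (heq2 z h h1').mp hr
        rwa [show z + t - 1 = z + (t - 1) by ring] at this
    · rintro (⟨⟨ha, hb⟩, hq⟩ | ⟨⟨ha, hb⟩, hq⟩)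
      · exact ⟨⟨by linarith, by linarith⟩, (heq1 z (by linarith) (by linarith)).mpr hq⟩
      · refine ⟨⟨by linarith, by linarith⟩, (heq2 z (by linarith) (by linarith)).mpr ?_⟩
        rwa [show z + t - 1 = z + (t - 1) by ring]
  have hm2 : MeasurableSet {w : ℝ | w ∈ Ioc (0:ℝ) t ∧ Q w} := measurableSet_Ioc.inter hQ
  have hdisj : Disjoint ((· + t) ⁻¹' {w : ℝ | w ∈ Icc t 1 ∧ Q w})
      ((· + (t - 1)) ⁻¹' {w : ℝ | w ∈ Ioc 0 t ∧ Q w}) := by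
    rw [Set.disjoint_left]
    rintro z ⟨⟨h1', h2'⟩, -⟩ ⟨⟨h3', h4'⟩, -⟩
    simp only [] at *
    linarith
  rw [e1, measure_union hdisj (hm2.preimage (measurable_add_const _)),
    measure_preimage_add_right, measure_preimage_add_right]
  have e2 : {z : ℝ | z ∈ Icc (0:ℝ) 1 ∧ Q z}
      = {w : ℝ | w ∈ Icc (0:ℝ) t ∧ Q w} ∪ {w : ℝ | w ∈ Ioc t 1 ∧ Q w} := by
    ext z
    simp only [mem_union, mem_setOf_eq, mem_Icc, mem_Ioc]
    constructor
    · rintro ⟨⟨h0, h1'⟩, hq⟩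
      rcases le_or_gt z t with h | h
      · exact Or.inl ⟨⟨h0, h⟩, hq⟩
      · exact Or.inr ⟨⟨h, h1'⟩, hq⟩
    · rintro (⟨⟨ha, hb⟩, hq⟩ | ⟨⟨ha, hb⟩, hq⟩)
      · exact ⟨⟨ha, by linarith⟩, hq⟩
      · exact ⟨⟨by linarith, hb⟩, hq⟩
  have hdisj2 : Disjoint {w : ℝ | w ∈ Icc (0:ℝ) t ∧ Q w} {w : ℝ | w ∈ Ioc t 1 ∧ Q w} := by
    rw [Set.disjoint_left]
    rintro z ⟨⟨-, h2'⟩, -⟩ ⟨⟨h3', -⟩, -⟩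
    linarith
  rw [e2, measure_union hdisj2 (measurableSet_Ioc.inter hQ)]
  have hA : volume {w : ℝ | w ∈ Icc t 1 ∧ Q w} = volume {w : ℝ | w ∈ Ioc t 1 ∧ Q w} := by
    refine vol_between {t} ?_ ?_ Real.volume_singleton
    · rintro z ⟨⟨h1', h2'⟩, hq⟩; exact ⟨⟨le_of_lt h1', h2'⟩, hq⟩
    · rintro z ⟨⟨h1', h2'⟩, hq⟩
      rcases eq_or_lt_of_le h1' with h | h
      · exact Or.inr (by simp [h.symm])
      · exact Or.inl ⟨⟨h, h2'⟩, hq⟩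
  have hB : volume {w : ℝ | w ∈ Icc (0:ℝ) t ∧ Q w} = volume {w : ℝ | w ∈ Ioc (0:ℝ) t ∧ Q w} := by
    refine vol_between {0} ?_ ?_ Real.volume_singleton
    · rintro z ⟨⟨h1', h2'⟩, hq⟩; exact ⟨⟨le_of_lt h1', h2'⟩, hq⟩
    · rintro z ⟨⟨h1', h2'⟩, hq⟩
      rcases eq_or_lt_of_le h1' with h | h
      · exact Or.inr (by simp [h.symm])
      · exact Or.inl ⟨⟨h, h2'⟩, hq⟩
  rw [hA, hB]
  exact add_comm _ _

open Set in
lemma refl_vol (a b r1 r2 : ℝ) :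
    volume {z : ℝ | z ∈ Icc (0:ℝ) 1 ∧ dL z a ≤ r1 ∧ dL z b ≤ r2}
      = volume {z : ℝ | z ∈ Icc (0:ℝ) 1 ∧ dL z (1 - a) ≤ r1 ∧ dL z (1 - b) ≤ r2} := by
  have e : {z : ℝ | z ∈ Icc (0:ℝ) 1 ∧ dL z (1 - a) ≤ r1 ∧ dL z (1 - b) ≤ r2}
      = Neg.neg ⁻¹' ((· + 1) ⁻¹' {z : ℝ | z ∈ Icc (0:ℝ) 1 ∧ dL z a ≤ r1 ∧ dL z b ≤ r2}) := by
    ext z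
    simp only [mem_preimage, mem_setOf_eq, mem_Icc]
    have h1 : -z + 1 = 1 - z := by ring
    rw [h1, dL_one_sub, dL_one_sub]
    constructor
    · rintro ⟨⟨h0, h1'⟩, ha, hb⟩; exact ⟨⟨by linarith, by linarith⟩, ha, hb⟩
    · rintro ⟨⟨h0, h1'⟩, ha, hb⟩; exact ⟨⟨by linarith, by linarith⟩, ha, hb⟩
  rw [e, Measure.measure_preimage_neg, measure_preimage_add_right]

open Set in
lemma canonical (rs rd x : ℝ) (hrd : 0 ≤ rd) (hrsd : rd ≤ rs) (hx0 : 0 ≤ x)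
    (h1 : x ≤ rs + rd) (h2 : x + rs + rd ≤ 1) :
    volume {z : ℝ | z ∈ Icc (0:ℝ) 1 ∧ dL z rs ≤ rs ∧ dL z (rs + x) ≤ rd}
      = ENNReal.ofReal (min (2 * rd) (rs + rd - x)) := by
  set m := min (rs + x + rd) (2 * rs) with hm
  have hm1 : m ≤ rs + x + rd := min_le_left _ _
  have hm2 : m ≤ 2 * rs := min_le_right _ _
  have hsub1 : Icc (rs + x - rd) m ⊆
      {z : ℝ | z ∈ Icc (0:ℝ) 1 ∧ dL z rs ≤ rs ∧ dL z (rs + x) ≤ rd} := by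
    rintro z ⟨hz1, hz2⟩
    refine ⟨⟨by linarith, by linarith⟩, ?_, ?_⟩
    · exact (min_le_left _ _).trans (abs_le.mpr ⟨by linarith, by linarith⟩)
    · exact (min_le_left _ _).trans (abs_le.mpr ⟨by linarith, by linarith⟩)
  have hsub2 : {z : ℝ | z ∈ Icc (0:ℝ) 1 ∧ dL z rs ≤ rs ∧ dL z (rs + x) ≤ rd} ⊆
      Icc (rs + x - rd) m ∪ {0, 1} := by
    rintro z ⟨⟨hz0, hz1⟩, hA, hB⟩
    rcases eq_or_lt_of_le hz0 with h | h
    · exact Or.inr (Or.inl h.symm)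
    rcases eq_or_lt_of_le hz1 with h' | h'
    · exact Or.inr (Or.inr h')
    left
    have hB' : |z - (rs + x)| ≤ rd := by
      rcases min_le_iff.mp hB with hb | hb
      · exact hb
      · have : 1 - rd ≤ |z - (rs + x)| := by linarith
        rcases le_abs.mp this with hc | hc
        · linarith
        · linarith
    have hzA : z ≤ 2 * rs := by
      rcases min_le_iff.mp hA with ha | ha
      · have := (abs_le.mp ha).2; linarith
      · have : 1 - rs ≤ |z - rs| := by linarith
        rcases le_abs.mp this with hc | hc
        · linarith
        · linarith
    have := abs_le.mp hB'
    exact ⟨by linarith [this.1], le_min (by linarith [this.2]) hzA⟩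
  have h01 : volume ({0, 1} : Set ℝ) = 0 :=
    Set.Countable.measure_zero (Set.Countable.insert 0 (Set.countable_singleton 1)) _
  rw [vol_between _ hsub1 hsub2 h01, Real.volume_Icc]
  congr 1
  rcases le_total (rs + x + rd) (2 * rs) with h | h
  · rw [hm, min_eq_left h, min_eq_left (by linarith)]; ring
  · rw [hm, min_eq_right h, min_eq_right (by linarith)]; ring

open Set in
lemma classA (rs rd x a : ℝ) (hrd : 0 ≤ rd) (hrsd : rd ≤ rs) (hx0 : 0 ≤ x)
    (h1 : x ≤ rs + rd) (h2 : x + rs + rd ≤ 1) (ha0 : 0 ≤ a) (hab1 : a + x ≤ 1) :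
    volume {z : ℝ | z ∈ Icc (0:ℝ) 1 ∧ dL z a ≤ rs ∧ dL z (a + x) ≤ rd}
      = ENNReal.ofReal (min (2 * rd) (rs + rd - x)) := by
  have hrs0 : 0 ≤ rs := le_trans hrd hrsd
  have hrs1 : rs ≤ 1 := by linarith
  rw [← canonical rs rd x hrd hrsd hx0 h1 h2]
  rcases le_total a rs with hc | hc
  · refine rot _ _ (meas_pair rs (rs + x) rs rd) (rs - a) (by linarith) (by linarith) ?_ ?_
    · intro z hz0 hz1
      rw [dL_shift' z (rs - a) a rs (by ring), dL_shift' z (rs - a) (a + x) (rs + x) (by ring)]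
    · intro z hz0 hz1
      have e1 : dL (z + (rs - a) - 1) rs = dL z a := by
        rw [show z + (rs - a) - 1 = (z - 1) + (rs - a) by ring,
          dL_shift' (z - 1) (rs - a) a rs (by ring),
          dL_sub_one_left z a (by linarith) (by linarith)]
      have e2 : dL (z + (rs - a) - 1) (rs + x) = dL z (a + x) := by
        rw [show z + (rs - a) - 1 = (z - 1) + (rs - a) by ring,
          dL_shift' (z - 1) (rs - a) (a + x) (rs + x) (by ring),
          dL_sub_one_left z (a + x) (by linarith) (by linarith)]
      rw [e1, e2]
  · refine rot _ _ (meas_pair rs (rs + x) rs rd) (1 + rs - a) (by linarith) (by linarith) ?_ ?_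
    · intro z hz0 hz1
      have e1 : dL (z + (1 + rs - a)) rs = dL z a := by
        rw [dL_shift' z (1 + rs - a) (a - 1) rs (by ring)]
        exact dL_sub_one_right z a (by linarith) (by linarith)
      have e2 : dL (z + (1 + rs - a)) (rs + x) = dL z (a + x) := by
        rw [dL_shift' z (1 + rs - a) (a + x - 1) (rs + x) (by ring),
          show a + x - 1 = (a + x) - 1 by ring]
        exact dL_sub_one_right z (a + x) (by linarith) (by linarith)
      rw [e1, e2]
    · intro z hz0 hz1
      have e1 : dL (z + (1 + rs - a) - 1) rs = dL z a := by
        rw [show z + (1 + rs - a) - 1 = z + (rs - a) by ring,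
          dL_shift' z (rs - a) a rs (by ring)]
      have e2 : dL (z + (1 + rs - a) - 1) (rs + x) = dL z (a + x) := by
        rw [show z + (1 + rs - a) - 1 = z + (rs - a) by ring,
          dL_shift' z (rs - a) (a + x) (rs + x) (by ring)]
      rw [e1, e2]

open Set in
lemma classB (rs rd x a : ℝ) (hrd : 0 ≤ rd) (hrsd : rd ≤ rs) (hx0 : 0 ≤ x)
    (h1 : x ≤ rs + rd) (h2 : x + rs + rd ≤ 1) (ha1 : a ≤ 1) (hab0 : 0 ≤ a + x - 1) :
    volume {z : ℝ | z ∈ Icc (0:ℝ) 1 ∧ dL z a ≤ rs ∧ dL z (a + x - 1) ≤ rd}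
      = ENNReal.ofReal (min (2 * rd) (rs + rd - x)) := by
  have hrs0 : 0 ≤ rs := le_trans hrd hrsd
  have hars : rs ≤ a := by linarith
  rw [← canonical rs rd x hrd hrsd hx0 h1 h2]
  refine rot _ _ (meas_pair rs (rs + x) rs rd) (1 + rs - a) (by linarith) (by linarith) ?_ ?_
  · intro z hz0 hz1
    have e1 : dL (z + (1 + rs - a)) rs = dL z a := by
      rw [dL_shift' z (1 + rs - a) (a - 1) rs (by ring)]
      exact dL_sub_one_right z a (by linarith) (by linarith)
    have e2 : dL (z + (1 + rs - a)) (rs + x) = dL z (a + x - 1) := by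
      rw [dL_shift' z (1 + rs - a) (a + x - 1) (rs + x) (by ring)]
    rw [e1, e2]
  · intro z hz0 hz1
    have e1 : dL (z + (1 + rs - a) - 1) rs = dL z a := by
      rw [show z + (1 + rs - a) - 1 = z + (rs - a) by ring,
        dL_shift' z (rs - a) a rs (by ring)]
    have e2 : dL (z + (1 + rs - a) - 1) (rs + x) = dL z (a + x - 1) := by
      rw [show z + (1 + rs - a) - 1 = z + (rs - a) by ring,
        dL_shift' z (rs - a) (a + x) (rs + x) (by ring),
        show a + x - 1 = (a + x) - 1 by ring]
      exact (dL_sub_one_right z (a + x) (by linarith) (by linarith)).symm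
    rw [e1, e2]

/-- measure of the set of common neighbors of two different-cluster
points at circular distance `x`, for radii `r_s ≥ r_d`. -/
theorem gbm_common_neighbor_measure_diff (xu xv rs rd : ℝ)
    (hxu : xu ∈ Set.Icc (0 : ℝ) 1) (hxv : xv ∈ Set.Icc (0 : ℝ) 1)
    (hrd : 0 ≤ rd) (hrsd : rd ≤ rs) :
    (dL xu xv ≤ rs + rd ∧ dL xu xv + rs + rd ≤ 1 →
      volume {z : ℝ | z ∈ Set.Icc (0 : ℝ) 1 ∧ dL z xu ≤ rs ∧ dL z xv ≤ rd}
        = ENNReal.ofReal (min (2 * rd) (rs + rd - dL xu xv))) ∧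
    (dL xu xv ≤ rs + rd ∧ dL xu xv + rs + rd ≤ 1 → dL xu xv ≤ rd → 2 * rd < rs →
      volume {z : ℝ | z ∈ Set.Icc (0 : ℝ) 1 ∧ dL z xu ≤ rs ∧ dL z xv ≤ rd}
        = ENNReal.ofReal (2 * rd)) := by
  obtain ⟨hxu0, hxu1⟩ := hxu
  obtain ⟨hxv0, hxv1⟩ := hxv
  set x := dL xu xv with hxdef
  have habs : |xu - xv| ≤ 1 := abs_le.mpr ⟨by linarith, by linarith⟩
  have hx0 : 0 ≤ x := le_min (abs_nonneg _) (by linarith)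
  have hrep : |xu - xv| = x ∨ |xu - xv| = 1 - x := by
    rcases le_total |xu - xv| (1 - |xu - xv|) with h | h
    · left; rw [hxdef]; unfold dL; rw [min_eq_left h]
    · right; rw [hxdef]; unfold dL; rw [min_eq_right h]; ring
  have main : x ≤ rs + rd → x + rs + rd ≤ 1 →
      volume {z : ℝ | z ∈ Set.Icc (0 : ℝ) 1 ∧ dL z xu ≤ rs ∧ dL z xv ≤ rd}
        = ENNReal.ofReal (min (2 * rd) (rs + rd - x)) := by
    intro h1 h2
    rcases le_total xu xv with hle | hle
    · have habs' : |xu - xv| = xv - xu := by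
        rw [abs_sub_comm]; exact abs_of_nonneg (by linarith)
      rcases hrep with hr | hr
      · rw [show xv = xu + x by linarith]
        exact classA rs rd x xu hrd hrsd hx0 h1 h2 hxu0 (by linarith)
      · rw [refl_vol xu xv rs rd]
        rw [show (1 : ℝ) - xv = (1 - xu) + x - 1 by linarith]
        exact classB rs rd x (1 - xu) hrd hrsd hx0 h1 h2 (by linarith) (by linarith)
    · have habs' : |xu - xv| = xu - xv := abs_of_nonneg (by linarith)
      rcases hrep with hr | hr
      · rw [refl_vol xu xv rs rd]
        rw [show (1 : ℝ) - xv = (1 - xu) + x by linarith]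
        exact classA rs rd x (1 - xu) hrd hrsd hx0 h1 h2 (by linarith) (by linarith)
      · rw [show xv = xu + x - 1 by linarith]
        exact classB rs rd x xu hrd hrsd hx0 h1 h2 hxu1 (by linarith)
  constructor
  · rintro ⟨h1, h2⟩; exact main h1 h2
  · rintro ⟨h1, h2⟩ h3 h4
    rw [main h1 h2]
    congr 1
    exact min_eq_left (by linarith)
end

section
/- Let x_u, x_v ∈ [0,1], let x = d_L(x_u, x_v), and let r ∈ [0, 1/2]. If x + 2r ≤ 1, then the Lebesgue measure of the set {z ∈ [0,1] : d_L(z, x_u) ≤ r and d_L(z, x_v) > r} equals min(x, 2r). -/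
open MeasureTheory

lemma mem_S_iff (u v r z : ℝ) :
    z ∈ {z : ℝ | z ∈ Set.Icc (0 : ℝ) 1 ∧ dL z u ≤ r ∧ r < dL z v} ↔
      (0 ≤ z ∧ z ≤ 1) ∧ (|z - u| ≤ r ∨ 1 - |z - u| ≤ r) ∧
        (r < |z - v| ∧ r < 1 - |z - v|) := by
  simp only [Set.mem_setOf_eq, Set.mem_Icc, dL, min_le_iff, lt_min_iff]

lemma measurable_S (u v r : ℝ) :
    MeasurableSet {z : ℝ | z ∈ Set.Icc (0 : ℝ) 1 ∧ dL z u ≤ r ∧ r < dL z v} := by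
  have h : ∀ c : ℝ, Measurable fun z : ℝ => dL z c := fun c =>
    ((measurable_id.sub_const c).abs).min
      (measurable_const.sub (measurable_id.sub_const c).abs)
  exact (measurableSet_Icc (a := (0:ℝ)) (b := 1)).inter
    ((measurableSet_le (h u) measurable_const).inter
      (measurableSet_lt measurable_const (h v)))

lemma mem_S_mm (u v r z : ℝ) (h0 : 0 ≤ z) (h1 : z ≤ 1)
    (hu1 : -r ≤ z - u) (hu2 : z - u ≤ r) (hv1 : r < v - z) (hv2 : v - z < 1 - r) :
    z ∈ {z : ℝ | z ∈ Set.Icc (0 : ℝ) 1 ∧ dL z u ≤ r ∧ r < dL z v} := by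
  rw [mem_S_iff]
  refine ⟨⟨h0, h1⟩, Or.inl (abs_le.mpr ⟨hu1, hu2⟩), lt_abs.mpr (Or.inr (by linarith)), ?_⟩
  have h : |z - v| < 1 - r := abs_lt.mpr ⟨by linarith, by linarith⟩
  linarith

lemma mem_S_wp (u v r z : ℝ) (h0 : 0 ≤ z) (h1 : z ≤ 1)
    (hu : 1 - r ≤ z - u) (hv1 : r < z - v) (hv2 : z - v < 1 - r) :
    z ∈ {z : ℝ | z ∈ Set.Icc (0 : ℝ) 1 ∧ dL z u ≤ r ∧ r < dL z v} := by
  rw [mem_S_iff]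
  refine ⟨⟨h0, h1⟩, Or.inr ?_, lt_abs.mpr (Or.inl hv1), ?_⟩
  · have h := le_abs.mpr (Or.inl hu); linarith
  · have h : |z - v| < 1 - r := abs_lt.mpr ⟨by linarith, hv2⟩
    linarith

lemma squeeze1 (S : Set ℝ) (a b : ℝ) (hab : a ≤ b)
    (h1 : Set.Ioo a b ⊆ S) (h2 : S ⊆ Set.Icc a b ∪ {0, 1}) :
    volume S = ENNReal.ofReal (b - a) := by
  apply le_antisymm
  · have h01 : volume ({0, 1} : Set ℝ) = 0 :=
      (Set.Countable.insert 0 (Set.countable_singleton 1)).measure_zero _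
    calc volume S ≤ volume (Set.Icc a b ∪ {0, 1}) := measure_mono h2
      _ ≤ volume (Set.Icc a b) + volume ({0, 1} : Set ℝ) := measure_union_le _ _
      _ = ENNReal.ofReal (b - a) := by rw [Real.volume_Icc, h01, add_zero]
  · rw [← Real.volume_Ioo (a := a) (b := b)]
    exact measure_mono h1

lemma squeeze2 (S : Set ℝ) (a b : ℝ) (hb : 0 ≤ b) (hba : b ≤ a) (ha : a ≤ 1)
    (h1 : Set.Ioo a 1 ∪ Set.Ioo 0 b ⊆ S) (h2 : S ⊆ Set.Icc a 1 ∪ Set.Icc 0 b) :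
    volume S = ENNReal.ofReal ((1 - a) + b) := by
  apply le_antisymm
  · calc volume S ≤ volume (Set.Icc a 1 ∪ Set.Icc 0 b) := measure_mono h2
      _ ≤ volume (Set.Icc a 1) + volume (Set.Icc 0 b) := measure_union_le _ _
      _ = ENNReal.ofReal (1 - a) + ENNReal.ofReal b := by
          rw [Real.volume_Icc, Real.volume_Icc, sub_zero]
      _ = ENNReal.ofReal ((1 - a) + b) := (ENNReal.ofReal_add (by linarith) hb).symm
  · have hd : Disjoint (Set.Ioo a 1) (Set.Ioo 0 b) := by
      apply Set.disjoint_left.mpr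
      intro x hx hx2
      exact absurd hx2.2 (not_lt.mpr (le_trans hba (le_of_lt hx.1)))
    calc ENNReal.ofReal ((1 - a) + b)
        = volume (Set.Ioo a 1) + volume (Set.Ioo 0 b) := by
          rw [Real.volume_Ioo, Real.volume_Ioo, sub_zero,
            ENNReal.ofReal_add (by linarith) hb]
      _ = volume (Set.Ioo a 1 ∪ Set.Ioo 0 b) := (measure_union hd measurableSet_Ioo).symm
      _ ≤ volume S := measure_mono h1

lemma main_lemma (u v r : ℝ) (hu0 : 0 ≤ u) (hu1 : u ≤ 1) (hv0 : 0 ≤ v) (hv1 : v ≤ 1)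
    (hr0 : 0 ≤ r) (hr1 : r ≤ 1/2) (huv : u ≤ v)
    (hx : dL u v + 2 * r ≤ 1) :
    volume {z : ℝ | z ∈ Set.Icc (0 : ℝ) 1 ∧ dL z u ≤ r ∧ r < dL z v}
      = ENNReal.ofReal (min (dL u v) (2 * r)) := by
  have habs : |u - v| = v - u := by rw [abs_sub_comm]; exact abs_of_nonneg (by linarith)
  have hd : dL u v = min (v - u) (1 - (v - u)) := by rw [dL, habs]
  rw [hd] at hx ⊢
  rcases le_or_gt (2*r) (v - u) with h1 | h1
  · rcases le_or_gt (2*r) (1 - (v - u)) with h2 | h2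
    · -- disjoint balls: answer 2r
      have hmin : min (min (v-u) (1-(v-u))) (2*r) = 2*r := min_eq_right (le_min h1 h2)
      rw [hmin]
      rcases le_or_gt 0 (u - r) with hs | hs
      · have key := squeeze1 _ (u - r) (u + r) (by linarith)
          (by
            intro z hz
            obtain ⟨hza, hzb⟩ := hz
            exact mem_S_mm u v r z (by linarith) (by linarith) (by linarith)
              (by linarith) (by linarith) (by linarith))
          (by
            intro z hz
            rw [mem_S_iff] at hz
            obtain ⟨⟨h0, h1z⟩, hu', hv1', hv2'⟩ := hz
            have hv2'' : |z - v| < 1 - r := by linarith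
            simp only [Set.mem_union, Set.mem_Icc, Set.mem_insert_iff,
              Set.mem_singleton_iff]
            rcases abs_cases (z - u) with ⟨e1, f1⟩ | ⟨e1, f1⟩ <;>
              rcases abs_cases (z - v) with ⟨e2, f2⟩ | ⟨e2, f2⟩ <;>
              rw [e1] at hu' <;> rw [e2] at hv1' hv2'' <;>
              rcases hu' with hu' | hu' <;>
              first
                | exact Or.inl ⟨by linarith, by linarith⟩
                | exact Or.inr (Or.inl (by linarith))
                | exact Or.inr (Or.inr (by linarith)))
        rw [key]
        congr 1; ring
      · have key := squeeze2 _ (u - r + 1) (u + r) (by linarith) (by linarith)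
          (by linarith)
          (by
            intro z hz
            rcases hz with ⟨hza, hzb⟩ | ⟨hza, hzb⟩
            · exact mem_S_wp u v r z (by linarith) (by linarith) (by linarith)
                (by linarith) (by linarith)
            · exact mem_S_mm u v r z (by linarith) (by linarith) (by linarith)
                (by linarith) (by linarith) (by linarith))
          (by
            intro z hz
            rw [mem_S_iff] at hz
            obtain ⟨⟨h0, h1z⟩, hu', hv1', hv2'⟩ := hz
            have hv2'' : |z - v| < 1 - r := by linarith
            simp only [Set.mem_union, Set.mem_Icc]
            rcases abs_cases (z - u) with ⟨e1, f1⟩ | ⟨e1, f1⟩ <;>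
              rcases abs_cases (z - v) with ⟨e2, f2⟩ | ⟨e2, f2⟩ <;>
              rw [e1] at hu' <;> rw [e2] at hv1' hv2'' <;>
              rcases hu' with hu' | hu' <;>
              first
                | exact Or.inl ⟨by linarith, by linarith⟩
                | exact Or.inr ⟨by linarith, by linarith⟩)
        rw [key]
        congr 1; ring
    · -- B1: 2r ≤ v-u, 1-(v-u) < 2r : answer 1-(v-u)
      have hmine : min (v-u) (1-(v-u)) = 1-(v-u) := min_eq_right (by linarith)
      rw [hmine] at hx ⊢
      have hmin : min (1-(v-u)) (2*r) = 1-(v-u) := min_eq_left (le_of_lt h2)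
      rw [hmin]
      rcases le_or_gt 0 (v + r - 1) with hs | hs
      · have key := squeeze1 _ (v + r - 1) (u + r) (by linarith)
          (by
            intro z hz
            obtain ⟨hza, hzb⟩ := hz
            exact mem_S_mm u v r z (by linarith) (by linarith) (by linarith)
              (by linarith) (by linarith) (by linarith))
          (by
            intro z hz
            rw [mem_S_iff] at hz
            obtain ⟨⟨h0, h1z⟩, hu', hv1', hv2'⟩ := hz
            have hv2'' : |z - v| < 1 - r := by linarith
            simp only [Set.mem_union, Set.mem_Icc, Set.mem_insert_iff,
              Set.mem_singleton_iff]
            rcases abs_cases (z - u) with ⟨e1, f1⟩ | ⟨e1, f1⟩ <;>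
              rcases abs_cases (z - v) with ⟨e2, f2⟩ | ⟨e2, f2⟩ <;>
              rw [e1] at hu' <;> rw [e2] at hv1' hv2'' <;>
              rcases hu' with hu' | hu' <;>
              first
                | exact Or.inl ⟨by linarith, by linarith⟩
                | exact Or.inr (Or.inl (by linarith))
                | exact Or.inr (Or.inr (by linarith)))
        rw [key]
        congr 1; ring
      · have key := squeeze2 _ (v + r) (u + r) (by linarith) (by linarith) (by linarith)
          (by
            intro z hz
            rcases hz with ⟨hza, hzb⟩ | ⟨hza, hzb⟩
            · exact mem_S_wp u v r z (by linarith) (by linarith) (by linarith)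
                (by linarith) (by linarith)
            · exact mem_S_mm u v r z (by linarith) (by linarith) (by linarith)
                (by linarith) (by linarith) (by linarith))
          (by
            intro z hz
            rw [mem_S_iff] at hz
            obtain ⟨⟨h0, h1z⟩, hu', hv1', hv2'⟩ := hz
            have hv2'' : |z - v| < 1 - r := by linarith
            simp only [Set.mem_union, Set.mem_Icc]
            rcases abs_cases (z - u) with ⟨e1, f1⟩ | ⟨e1, f1⟩ <;>
              rcases abs_cases (z - v) with ⟨e2, f2⟩ | ⟨e2, f2⟩ <;>
              rw [e1] at hu' <;> rw [e2] at hv1' hv2'' <;>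
              rcases hu' with hu' | hu' <;>
              first
                | exact Or.inl ⟨by linarith, by linarith⟩
                | exact Or.inr ⟨by linarith, by linarith⟩)
        rw [key]
        congr 1; ring
  · -- A1 : v - u < 2r : answer v - u
    have hx' : (v - u) + 2*r ≤ 1 := by
      rcases min_cases (v - u) (1 - (v - u)) with ⟨he, hc⟩ | ⟨he, hc⟩ <;>
        rw [he] at hx <;> linarith
    have hmine : min (v-u) (1-(v-u)) = v-u := min_eq_left (by linarith)
    rw [hmine]
    have hmin : min (v-u) (2*r) = v-u := min_eq_left (le_of_lt h1)
    rw [hmin]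
    rcases le_or_gt 0 (u - r) with hs | hs
    · -- A1-i
      have key := squeeze1 _ (u - r) (v - r) (by linarith)
        (by
          intro z hz
          obtain ⟨hza, hzb⟩ := hz
          exact mem_S_mm u v r z (by linarith) (by linarith) (by linarith)
            (by linarith) (by linarith) (by linarith))
        (by
          intro z hz
          rw [mem_S_iff] at hz
          obtain ⟨⟨h0, h1z⟩, hu', hv1', hv2'⟩ := hz
          have hv2'' : |z - v| < 1 - r := by linarith
          simp only [Set.mem_union, Set.mem_Icc, Set.mem_insert_iff,
            Set.mem_singleton_iff]
          rcases abs_cases (z - u) with ⟨e1, f1⟩ | ⟨e1, f1⟩ <;>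
            rcases abs_cases (z - v) with ⟨e2, f2⟩ | ⟨e2, f2⟩ <;>
            rw [e1] at hu' <;> rw [e2] at hv1' hv2'' <;>
            rcases hu' with hu' | hu' <;>
            first
              | exact Or.inl ⟨by linarith, by linarith⟩
              | exact Or.inr (Or.inl (by linarith))
              | exact Or.inr (Or.inr (by linarith)))
      rw [key]
      congr 1; ring
    · rcases le_or_gt (v - r) 0 with hs2 | hs2
      · -- A1-ii : full wrap
        have key := squeeze1 _ (u - r + 1) (v - r + 1) (by linarith)
          (by
            intro z hz
            obtain ⟨hza, hzb⟩ := hz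
            exact mem_S_wp u v r z (by linarith) (by linarith) (by linarith)
              (by linarith) (by linarith))
          (by
            intro z hz
            rw [mem_S_iff] at hz
            obtain ⟨⟨h0, h1z⟩, hu', hv1', hv2'⟩ := hz
            have hv2'' : |z - v| < 1 - r := by linarith
            simp only [Set.mem_union, Set.mem_Icc, Set.mem_insert_iff,
              Set.mem_singleton_iff]
            rcases abs_cases (z - u) with ⟨e1, f1⟩ | ⟨e1, f1⟩ <;>
              rcases abs_cases (z - v) with ⟨e2, f2⟩ | ⟨e2, f2⟩ <;>
              rw [e1] at hu' <;> rw [e2] at hv1' hv2'' <;>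
              rcases hu' with hu' | hu' <;>
              first
                | exact Or.inl ⟨by linarith, by linarith⟩
                | exact Or.inr (Or.inl (by linarith))
                | exact Or.inr (Or.inr (by linarith)))
        rw [key]
        congr 1; ring
      · -- A1-iii : partial wrap
        have key := squeeze2 _ (u - r + 1) (v - r) (by linarith) (by linarith)
          (by linarith)
          (by
            intro z hz
            rcases hz with ⟨hza, hzb⟩ | ⟨hza, hzb⟩
            · exact mem_S_wp u v r z (by linarith) (by linarith) (by linarith)
                (by linarith) (by linarith)
            · exact mem_S_mm u v r z (by linarith) (by linarith) (by linarith)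
                (by linarith) (by linarith) (by linarith))
          (by
            intro z hz
            rw [mem_S_iff] at hz
            obtain ⟨⟨h0, h1z⟩, hu', hv1', hv2'⟩ := hz
            have hv2'' : |z - v| < 1 - r := by linarith
            simp only [Set.mem_union, Set.mem_Icc]
            rcases abs_cases (z - u) with ⟨e1, f1⟩ | ⟨e1, f1⟩ <;>
              rcases abs_cases (z - v) with ⟨e2, f2⟩ | ⟨e2, f2⟩ <;>
              rw [e1] at hu' <;> rw [e2] at hv1' hv2'' <;>
              rcases hu' with hu' | hu' <;>
              first
                | exact Or.inl ⟨by linarith, by linarith⟩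
                | exact Or.inr ⟨by linarith, by linarith⟩)
        rw [key]
        congr 1; ring

/-- measure of the set of points within distance `r` of `x_u`
but not within distance `r` of `x_v` (Motif 2). -/
theorem gbm_motif2_measure (xu xv r : ℝ)
    (hxu : xu ∈ Set.Icc (0 : ℝ) 1) (hxv : xv ∈ Set.Icc (0 : ℝ) 1)
    (hr : r ∈ Set.Icc (0 : ℝ) (1 / 2))
    (hx : dL xu xv + 2 * r ≤ 1) :
    volume {z : ℝ | z ∈ Set.Icc (0 : ℝ) 1 ∧ dL z xu ≤ r ∧ r < dL z xv}
      = ENNReal.ofReal (min (dL xu xv) (2 * r)) := by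
  obtain ⟨hu0, hu1⟩ := hxu
  obtain ⟨hv0, hv1⟩ := hxv
  obtain ⟨hr0, hr1⟩ := hr
  rcases le_total xu xv with h | h
  · exact main_lemma xu xv r hu0 hu1 hv0 hv1 hr0 hr1 h hx
  · have hmp : MeasurePreserving (fun z : ℝ => 1 - z) volume volume :=
      Measure.measurePreserving_sub_left volume 1
    have hdL : dL xu xv = dL (1 - xu) (1 - xv) := by
      simp only [dL]
      rw [show (1:ℝ) - xu - (1 - xv) = -(xu - xv) by ring, abs_neg]
    have hpre : (fun z : ℝ => 1 - z) ⁻¹'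
        {z : ℝ | z ∈ Set.Icc (0 : ℝ) 1 ∧ dL z (1 - xu) ≤ r ∧ r < dL z (1 - xv)}
        = {z : ℝ | z ∈ Set.Icc (0 : ℝ) 1 ∧ dL z xu ≤ r ∧ r < dL z xv} := by
      ext z
      have e1 : |1 - z - (1 - xu)| = |z - xu| := by
        rw [show (1:ℝ) - z - (1 - xu) = -(z - xu) by ring, abs_neg]
      have e2 : |1 - z - (1 - xv)| = |z - xv| := by
        rw [show (1:ℝ) - z - (1 - xv) = -(z - xv) by ring, abs_neg]
      simp only [Set.mem_preimage, Set.mem_setOf_eq, Set.mem_Icc, dL, e1, e2]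
      constructor
      · rintro ⟨⟨a, b⟩, c, d⟩; exact ⟨⟨by linarith, by linarith⟩, c, d⟩
      · rintro ⟨⟨a, b⟩, c, d⟩; exact ⟨⟨by linarith, by linarith⟩, c, d⟩
    calc volume {z : ℝ | z ∈ Set.Icc (0 : ℝ) 1 ∧ dL z xu ≤ r ∧ r < dL z xv}
        = volume ((fun z : ℝ => 1 - z) ⁻¹'
            {z : ℝ | z ∈ Set.Icc (0 : ℝ) 1 ∧ dL z (1 - xu) ≤ r ∧ r < dL z (1 - xv)}) := by
          rw [hpre]
      _ = volume {z : ℝ | z ∈ Set.Icc (0 : ℝ) 1 ∧ dL z (1 - xu) ≤ r ∧ r < dL z (1 - xv)} :=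
          hmp.measure_preimage (measurable_S _ _ _).nullMeasurableSet
      _ = ENNReal.ofReal (min (dL (1 - xu) (1 - xv)) (2 * r)) :=
          main_lemma (1 - xu) (1 - xv) r (by linarith) (by linarith) (by linarith)
            (by linarith) hr0 hr1 (by linarith) (by rw [← hdL]; exact hx)
      _ = ENNReal.ofReal (min (dL xu xv) (2 * r)) := by rw [← hdL]
end

section
/- Fix x_u, x_v ∈ [0,1] with x = d_L(x_u, x_v), let 0 ≤ r_d ≤ r_s with x ≤ r_s and x + 2r_s ≤ 1, and let Z_1, …, Z_{m₁} and W_1, …, W_{m₂} be i.i.d. uniform on [0,1]. Then: (i) the count #{i ≤ m₁ : d_L(Z_i, x_u) ≤ r_s and d_L(Z_i, x_v) > r_s} has the binomial distribution Bin(m₁, x); (ii) the count #{j ≤ m₂ : d_L(W_j, x_u) ≤ r_d and d_L(W_j, x_v) > r_d} has the binomial distribution Bin(m₂, min(x, 2r_d)). -/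
open MeasureTheory

/-- The uniform (probability) measure on `[0,1]`. -/
noncomputable def unif : Measure ℝ := volume.restrict (Set.Icc (0 : ℝ) 1)

/-- The binomial probability `Bin(m,p)` of the value `k`. -/
noncomputable def binomPMF (m : ℕ) (p : ℝ) (k : ℕ) : ENNReal :=
  ENNReal.ofReal ((m.choose k : ℝ) * p ^ k * (1 - p) ^ (m - k))


namespace GBMAux



/-- periodic circle distance -/
noncomputable def dC (z c : ℝ) : ℝ := min (Int.fract (z - c)) (1 - Int.fract (z - c))

lemma fract_eq (t : ℝ) : Int.fract t = t - ⌊t⌋ := rfl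

lemma dC_eq_dL {z c : ℝ} (h : |z - c| ≤ 1) : dC z c = dL z c := by
  unfold dC dL
  obtain ⟨hl, hr⟩ := abs_le.mp h
  rcases le_or_gt c z with hcz | hcz
  · have h0 : 0 ≤ z - c := by linarith
    rcases lt_or_eq_of_le hr with h1 | h1
    · rw [Int.fract_eq_self.mpr ⟨h0, h1⟩, abs_of_nonneg h0]
    · rw [h1, Int.fract_one]
      norm_num
  · have hfl : ⌊z - c⌋ = -1 := by
      rw [Int.floor_eq_iff]
      push_cast
      constructor <;> linarith
    have hf : Int.fract (z - c) = z - c + 1 := by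
      rw [fract_eq, hfl]; push_cast; ring
    rw [hf, abs_of_neg (by linarith)]
    rw [min_comm]
    congr 1 <;> ring

lemma dC_le (z c : ℝ) (k : ℤ) : dC z c ≤ |z - c - k| := by
  set t := z - c with ht
  have hf0 := Int.fract_nonneg t
  have hf1 := Int.fract_lt_one t
  have hfe : Int.fract t = t - ⌊t⌋ := rfl
  rcases le_or_gt k ⌊t⌋ with hk | hk
  · have hkr : (k : ℝ) ≤ (⌊t⌋ : ℝ) := by exact_mod_cast hk
    have := le_abs_self (t - (k : ℝ))
    exact le_trans (min_le_left _ _) (by linarith)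
  · have hkr : (⌊t⌋ : ℝ) + 1 ≤ (k : ℝ) := by exact_mod_cast hk
    have := neg_abs_le (t - (k : ℝ))
    exact le_trans (min_le_right _ _) (by linarith)

lemma lt_dC {z c r : ℝ} (k : ℤ) (h1 : (k : ℝ) + r < z - c) (h2 : z - c < (k : ℝ) + 1 - r)
    (hr : 0 ≤ r) : r < dC z c := by
  have hfl : ⌊z - c⌋ = k := by
    rw [Int.floor_eq_iff]
    constructor <;> push_cast <;> linarith
  have hf : Int.fract (z - c) = z - c - k := by rw [fract_eq, hfl]
  unfold dC
  rw [hf]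
  exact lt_min (by linarith) (by linarith)

lemma dC_window {z u : ℝ} (h1 : u - 1/2 < z) (h2 : z ≤ u + 1/2) : dC z u = |z - u| := by
  rcases le_or_gt u z with h | h
  · have hf : Int.fract (z - u) = z - u :=
      Int.fract_eq_self.mpr ⟨by linarith, by linarith⟩
    unfold dC
    rw [hf, abs_of_nonneg (by linarith)]
    exact min_eq_left (by linarith)
  · have hfl : ⌊z - u⌋ = -1 := by
      rw [Int.floor_eq_iff]; push_cast; constructor <;> linarith
    have hf : Int.fract (z - u) = z - u + 1 := by rw [fract_eq, hfl]; push_cast; ring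
    unfold dC
    rw [hf, abs_of_neg (by linarith)]
    rw [min_eq_right (by linarith)]
    ring

lemma dC_add_one (z c : ℝ) : dC (z + 1) c = dC z c := by
  unfold dC
  rw [show z + 1 - c = (z - c) + 1 by ring, Int.fract_add_one]

lemma dC_add_int (z c : ℝ) (k : ℤ) : dC z (c + k) = dC z c := by
  unfold dC
  rw [show z - (c + k) = (z - c) - k by ring, Int.fract_sub_intCast]

lemma dC_measurable (c : ℝ) : Measurable fun z => dC z c := by
  unfold dC
  exact (measurable_fract.comp (measurable_id.sub measurable_const)).min
    (measurable_const.sub (measurable_fract.comp (measurable_id.sub measurable_const)))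


lemma step (A : Set ℝ) (hA : ∀ z, z ∈ A ↔ z + 1 ∈ A) (a b : ℝ) :
    volume (A ∩ Set.Ioc (a + 1) (b + 1)) = volume (A ∩ Set.Ioc a b) := by
  have hpre : (fun z : ℝ => z + 1) ⁻¹' (A ∩ Set.Ioc (a + 1) (b + 1)) = A ∩ Set.Ioc a b := by
    ext z
    simp only [Set.mem_preimage, Set.mem_inter_iff, Set.mem_Ioc]
    rw [← hA]
    constructor <;> rintro ⟨h1, h2, h3⟩ <;> exact ⟨h1, by linarith, by linarith⟩
  rw [← hpre, measure_preimage_add_right]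

lemma windowEq (A : Set ℝ) (hA : ∀ z, z ∈ A ↔ z + 1 ∈ A) (hm : MeasurableSet A)
    (t : ℝ) (ht : t ∈ Set.Icc (-1 : ℝ) 1) :
    volume (A ∩ Set.Ioc t (t + 1)) = volume (A ∩ Set.Ioc 0 1) := by
  have key : ∀ s : ℝ, s ∈ Set.Icc (0 : ℝ) 1 →
      volume (A ∩ Set.Ioc s (s + 1)) = volume (A ∩ Set.Ioc 0 1) := by
    intro s hs
    obtain ⟨hs0, hs1⟩ := hs
    have hd : ∀ a b c : ℝ, Disjoint (A ∩ Set.Ioc a b) (A ∩ Set.Ioc b c) := by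
      intro a b c
      refine Set.disjoint_left.mpr ?_
      rintro z ⟨_, _, h2⟩ ⟨_, h3, _⟩
      linarith
    have h1 : volume (A ∩ Set.Ioc 0 1)
        = volume (A ∩ Set.Ioc 0 s) + volume (A ∩ Set.Ioc s 1) := by
      rw [← measure_union (hd 0 s 1) (hm.inter measurableSet_Ioc)]
      rw [← Set.inter_union_distrib_left, Set.Ioc_union_Ioc_eq_Ioc hs0 hs1]
    have h2 : volume (A ∩ Set.Ioc s (s + 1))
        = volume (A ∩ Set.Ioc s 1) + volume (A ∩ Set.Ioc 1 (s + 1)) := by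
      rw [← measure_union (hd s 1 (s + 1)) (hm.inter measurableSet_Ioc)]
      rw [← Set.inter_union_distrib_left, Set.Ioc_union_Ioc_eq_Ioc hs1 (by linarith)]
    have h3 : volume (A ∩ Set.Ioc 1 (s + 1)) = volume (A ∩ Set.Ioc 0 s) := by
      have := step A hA 0 s
      rw [zero_add] at this
      exact this
    rw [h2, h3, h1, add_comm]
  rcases le_or_gt 0 t with h0 | h0
  · exact key t ⟨h0, ht.2⟩
  · have hstep := step A hA t (t + 1)
    rw [← hstep]
    have := key (t + 1) ⟨by linarith [ht.1], by linarith⟩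
    convert this using 3
  



lemma unif_crescent (u v r : ℝ) (hu : u ∈ Set.Icc (0:ℝ) 1) (hv : v ∈ Set.Icc (0:ℝ) 1)
    (hr : 0 ≤ r) (h1 : dL u v + 2 * r ≤ 1) :
    unif {z | dL z u ≤ r ∧ r < dL z v} = ENNReal.ofReal (min (dL u v) (2 * r)) := by
  obtain ⟨hu0, hu1⟩ := hu
  obtain ⟨hv0, hv1⟩ := hv
  set x := dL u v with hxdef
  have habs : |u - v| ≤ 1 := abs_le.mpr ⟨by linarith, by linarith⟩
  have habs' := abs_le.mp habs
  have hx0 : 0 ≤ x := by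
    rw [hxdef]; unfold dL; exact le_min (abs_nonneg _) (by linarith)
  have hxhalf : x ≤ 1/2 := by
    rw [hxdef]; unfold dL
    rcases le_total |u - v| (1/2) with h | h
    · exact le_trans (min_le_left _ _) h
    · exact le_trans (min_le_right _ _) (by linarith)
  have hr2 : r ≤ 1/2 := by linarith
  -- a representative of v nearest to u
  obtain ⟨k, hk⟩ : ∃ k : ℤ, |v + (k : ℝ) - u| = x := by
    rcases le_total |u - v| (1 - |u - v|) with h | h
    · refine ⟨0, ?_⟩
      push_cast
      rw [add_zero, show v - u = -(u - v) by ring, abs_neg, hxdef]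
      unfold dL
      exact (min_eq_left h).symm
    · have hx' : x = 1 - |u - v| := by rw [hxdef]; unfold dL; exact min_eq_right h
      rcases le_total u v with huv | huv
      · refine ⟨-1, ?_⟩
        push_cast
        rw [abs_of_nonpos (by linarith), hx', abs_of_nonpos (by linarith)]
        ring
      · refine ⟨1, ?_⟩
        push_cast
        rw [abs_of_nonneg (by linarith), hx', abs_of_nonneg (by linarith)]
        ring
  set w : ℝ := v + (k : ℝ) with hwdef
  -- the periodized crescent
  set A := {z : ℝ | dC z u ≤ r ∧ r < dC z v} with hAdef
  have hAm : MeasurableSet A := by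
    exact (measurableSet_le (dC_measurable u) measurable_const).inter
      (measurableSet_lt measurable_const (dC_measurable v))
  have hAper : ∀ z, z ∈ A ↔ z + 1 ∈ A := by
    intro z
    simp only [hAdef, Set.mem_setOf_eq, dC_add_one]
  have hSA : {z | dL z u ≤ r ∧ r < dL z v} ∩ Set.Icc 0 1 = A ∩ Set.Icc 0 1 := by
    ext z
    simp only [Set.mem_inter_iff, Set.mem_setOf_eq, Set.mem_Icc, hAdef]
    constructor
    · rintro ⟨⟨h1z, h2z⟩, h3, h4⟩
      have e1 : dC z u = dL z u := dC_eq_dL (abs_le.mpr ⟨by linarith, by linarith⟩)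
      have e2 : dC z v = dL z v := dC_eq_dL (abs_le.mpr ⟨by linarith, by linarith⟩)
      exact ⟨⟨by rw [e1]; exact h1z, by rw [e2]; exact h2z⟩, h3, h4⟩
    · rintro ⟨⟨h1z, h2z⟩, h3, h4⟩
      have e1 : dC z u = dL z u := dC_eq_dL (abs_le.mpr ⟨by linarith, by linarith⟩)
      have e2 : dC z v = dL z v := dC_eq_dL (abs_le.mpr ⟨by linarith, by linarith⟩)
      exact ⟨⟨by rw [← e1]; exact h1z, by rw [← e2]; exact h2z⟩, h3, h4⟩
  have hunif : unif {z | dL z u ≤ r ∧ r < dL z v} = volume (A ∩ Set.Icc 0 1) := by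
    rw [unif, Measure.restrict_apply' measurableSet_Icc, hSA]
  have hIccIoc : volume (A ∩ Set.Icc 0 1) = volume (A ∩ Set.Ioc 0 1) := by
    apply le_antisymm
    · calc volume (A ∩ Set.Icc 0 1) ≤ volume ((A ∩ Set.Ioc 0 1) ∪ {0}) := by
            apply measure_mono
            rintro z ⟨hz, h0, h1⟩
            rcases eq_or_lt_of_le h0 with h | h
            · exact Or.inr (by simp [← h])
            · exact Or.inl ⟨hz, h, h1⟩
        _ ≤ volume (A ∩ Set.Ioc 0 1) + volume {0} := measure_union_le _ _
        _ = volume (A ∩ Set.Ioc 0 1) := by rw [Real.volume_singleton, add_zero]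
    · exact measure_mono (Set.inter_subset_inter_right _ Set.Ioc_subset_Icc_self)
  set m := min x (2 * r) with hmdef
  have hm0 : 0 ≤ m := le_min hx0 (by linarith)
  have hmx : m ≤ x := min_le_left _ _
  have hm2r : m ≤ 2 * r := min_le_right _ _
  have hwin := windowEq A hAper hAm (u - 1/2) ⟨by linarith, by linarith⟩
  rw [hunif, hIccIoc, ← hwin]
  have hwv : v = w - (k : ℝ) := by rw [hwdef]; ring
  rcases le_total u w with hcase | hcase
  · -- w = u + x
    have hwu : w = u + x := by
      have := abs_of_nonneg (by linarith : (0:ℝ) ≤ w - u)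
      rw [hwdef] at this ⊢
      linarith [hk, this]
    have hvx : v + (k : ℝ) = u + x := by rw [← hwdef]; exact hwu
    have hsub1 : Set.Ioo (u - r) (u - r + m) ⊆ A ∩ Set.Ioc (u - 1/2) (u - 1/2 + 1) := by
      rintro z ⟨hz1, hz2⟩
      have hzw1 : u - 1/2 < z := by linarith
      have hzw2 : z ≤ u + 1/2 := by linarith
      refine ⟨⟨?_, ?_⟩, hzw1, by linarith⟩
      · rw [dC_window hzw1 hzw2]
        exact abs_le.mpr ⟨by linarith, by linarith⟩
      · refine lt_dC (k - 1) ?_ ?_ hr <;> push_cast <;> linarith [hvx]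
    have hsub2 : A ∩ Set.Ioc (u - 1/2) (u - 1/2 + 1) ⊆ Set.Icc (u - r) (u - r + m) := by
      rintro z ⟨⟨h1z, h2z⟩, hw1, hw2⟩
      have hw2' : z ≤ u + 1/2 := by linarith
      rw [dC_window hw1 hw2'] at h1z
      obtain ⟨ha1, ha2⟩ := abs_le.mp h1z
      refine ⟨by linarith, ?_⟩
      by_contra hcon
      push_neg at hcon
      rcases le_total x (2 * r) with hc | hc
      · have hm' : m = x := min_eq_left hc
        have hge := dC_le z v k
        have habs2 : |z - v - (k : ℝ)| ≤ r := by
          refine abs_le.mpr ⟨by linarith [hvx], by linarith [hvx]⟩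
        linarith
      · have hm' : m = 2 * r := min_eq_right hc
        linarith
    apply le_antisymm
    · calc volume (A ∩ Set.Ioc (u - 1/2) (u - 1/2 + 1))
          ≤ volume (Set.Icc (u - r) (u - r + m)) := measure_mono hsub2
        _ = ENNReal.ofReal m := by rw [Real.volume_Icc]; congr 1; ring
    · calc ENNReal.ofReal m = volume (Set.Ioo (u - r) (u - r + m)) := by
            rw [Real.volume_Ioo]; congr 1; ring
        _ ≤ volume (A ∩ Set.Ioc (u - 1/2) (u - 1/2 + 1)) := measure_mono hsub1
  · -- w = u - x
    have hwu : w = u - x := by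
      have := abs_of_nonpos (by linarith : w - u ≤ (0:ℝ))
      rw [hwdef] at this ⊢
      linarith [hk, this]
    have hvx : v + (k : ℝ) = u - x := by rw [← hwdef]; exact hwu
    have hsub1 : Set.Ioo (u + r - m) (u + r) ⊆ A ∩ Set.Ioc (u - 1/2) (u - 1/2 + 1) := by
      rintro z ⟨hz1, hz2⟩
      have hzw1 : u - 1/2 < z := by linarith
      have hzw2 : z ≤ u + 1/2 := by linarith
      refine ⟨⟨?_, ?_⟩, hzw1, by linarith⟩
      · rw [dC_window hzw1 hzw2]
        exact abs_le.mpr ⟨by linarith, by linarith⟩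
      · refine lt_dC k ?_ ?_ hr <;> push_cast <;> linarith [hvx]
    have hsub2 : A ∩ Set.Ioc (u - 1/2) (u - 1/2 + 1) ⊆ Set.Icc (u + r - m) (u + r) := by
      rintro z ⟨⟨h1z, h2z⟩, hw1, hw2⟩
      have hw2' : z ≤ u + 1/2 := by linarith
      rw [dC_window hw1 hw2'] at h1z
      obtain ⟨ha1, ha2⟩ := abs_le.mp h1z
      refine ⟨?_, by linarith⟩
      by_contra hcon
      push_neg at hcon
      rcases le_total x (2 * r) with hc | hc
      · have hm' : m = x := min_eq_left hc
        have hge := dC_le z v k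
        have habs2 : |z - v - (k : ℝ)| ≤ r := by
          refine abs_le.mpr ⟨by linarith [hvx], by linarith [hvx]⟩
        linarith
      · have hm' : m = 2 * r := min_eq_right hc
        linarith
    apply le_antisymm
    · calc volume (A ∩ Set.Ioc (u - 1/2) (u - 1/2 + 1))
          ≤ volume (Set.Icc (u + r - m) (u + r)) := measure_mono hsub2
        _ = ENNReal.ofReal m := by rw [Real.volume_Icc]; congr 1; ring
    · calc ENNReal.ofReal m = volume (Set.Ioo (u + r - m) (u + r)) := by
            rw [Real.volume_Ioo]; congr 1; ring
        _ ≤ volume (A ∩ Set.Ioc (u - 1/2) (u - 1/2 + 1)) := measure_mono hsub1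


lemma binomial_count (μ : Measure ℝ) [IsProbabilityMeasure μ] (P : ℝ → Prop)
    [DecidablePred P] (hS : MeasurableSet {z | P z}) (p : ℝ) (hp0 : 0 ≤ p) (hp1 : p ≤ 1)
    (hμS : μ {z | P z} = ENNReal.ofReal p) (m k : ℕ) :
    Measure.pi (fun _ : Fin m => μ)
      {ω | (Finset.univ.filter fun i => P (ω i)).card = k} = binomPMF m p k := by
  set S : Set ℝ := {z | P z} with hSdef
  have hSc : μ Sᶜ = ENNReal.ofReal (1 - p) := by
    rw [measure_compl hS (measure_ne_top _ _), measure_univ, hμS,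
      ← ENNReal.ofReal_one, ← ENNReal.ofReal_sub _ hp0]
  set E : Finset (Fin m) → Set (Fin m → ℝ) :=
    fun T => Set.pi Set.univ (fun i => if i ∈ T then S else Sᶜ) with hE
  have hEm : ∀ T, MeasurableSet (E T) := by
    intro T
    apply MeasurableSet.univ_pi
    intro i
    by_cases h : i ∈ T <;> simp only [h, if_true, if_false]
    · exact hS
    · exact hS.compl
  have hmem : ∀ (ω : Fin m → ℝ) (T : Finset (Fin m)),
      ω ∈ E T ↔ ∀ i, P (ω i) ↔ i ∈ T := by
    intro ω T
    simp only [hE, Set.mem_pi, Set.mem_univ, forall_true_left]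
    constructor
    · intro h i
      have := h i
      by_cases hi : i ∈ T <;> simp only [hi, if_true, if_false, iff_true, iff_false] at this ⊢
      · exact this
      · exact this
    · intro h i
      have := h i
      by_cases hi : i ∈ T <;> simp only [hi, if_true, if_false, iff_true, iff_false] at this ⊢
      · exact this
      · exact this
  have hset : {ω : Fin m → ℝ | (Finset.univ.filter fun i => P (ω i)).card = k}
      = ⋃ T ∈ Finset.univ.filter (fun T : Finset (Fin m) => T.card = k), E T := by
    ext ω
    simp only [Set.mem_setOf_eq, Set.mem_iUnion, Finset.mem_filter, Finset.mem_univ, true_and]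
    constructor
    · intro h
      refine ⟨Finset.univ.filter fun i => P (ω i), h, (hmem ω _).mpr fun i => ?_⟩
      simp
    · rintro ⟨T, hT, hTmem⟩
      rw [hmem] at hTmem
      have : Finset.univ.filter (fun i => P (ω i)) = T := by
        ext i
        simp only [Finset.mem_filter, Finset.mem_univ, true_and]
        exact hTmem i
      rw [this, hT]
  have hdisj : (↑(Finset.univ.filter (fun T : Finset (Fin m) => T.card = k)) :
      Set (Finset (Fin m))).PairwiseDisjoint E := by
    intro T hT T' hT' hne
    refine Set.disjoint_left.mpr ?_
    intro ω hω hω'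
    apply hne
    ext i
    rw [← (hmem ω T).mp hω i, ← (hmem ω T').mp hω' i]
  have hmeas : ∀ T : Finset (Fin m),
      Measure.pi (fun _ : Fin m => μ) (E T)
        = ENNReal.ofReal p ^ T.card * ENNReal.ofReal (1 - p) ^ (m - T.card) := by
    intro T
    rw [hE]
    rw [Measure.pi_pi]
    have hc : ∀ i : Fin m, μ (if i ∈ T then S else Sᶜ)
        = if i ∈ T then ENNReal.ofReal p else ENNReal.ofReal (1 - p) := by
      intro i; by_cases h : i ∈ T <;> simp only [h, if_true, if_false, hμS, hSc]
    rw [Finset.prod_congr rfl fun i _ => hc i]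
    rw [← Finset.prod_mul_prod_compl T]
    congr 1
    · rw [Finset.prod_congr rfl fun i hi => if_pos hi, Finset.prod_const]
    · rw [Finset.prod_congr rfl fun i hi => if_neg (Finset.mem_compl.mp hi),
        Finset.prod_const, Finset.card_compl, Fintype.card_fin]
  rw [hset, measure_biUnion_finset hdisj fun T _ => hEm T]
  have hsum : ∀ T ∈ Finset.univ.filter (fun T : Finset (Fin m) => T.card = k),
      Measure.pi (fun _ : Fin m => μ) (E T)
        = ENNReal.ofReal p ^ k * ENNReal.ofReal (1 - p) ^ (m - k) := by
    intro T hT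
    rw [hmeas T, (Finset.mem_filter.mp hT).2]
  rw [Finset.sum_congr rfl hsum, Finset.sum_const]
  have hcard : (Finset.univ.filter (fun T : Finset (Fin m) => T.card = k)).card
      = m.choose k := by
    rw [← Finset.powerset_univ, ← Finset.powersetCard_eq_filter,
      Finset.card_powersetCard, Finset.card_fin]
  rw [hcard, nsmul_eq_mul, binomPMF]
  rw [ENNReal.ofReal_mul (by positivity), ENNReal.ofReal_mul (by exact Nat.cast_nonneg _),
    ENNReal.ofReal_pow hp0, ENNReal.ofReal_pow (by linarith), ENNReal.ofReal_natCast, mul_assoc]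

instance : IsProbabilityMeasure unif :=
  ⟨by rw [unif, Measure.restrict_apply_univ, Real.volume_Icc]; norm_num⟩

lemma dL_continuous (c : ℝ) : Continuous fun z => dL z c := by
  unfold dL
  exact ((continuous_id.sub continuous_const).abs).min
    (continuous_const.sub (continuous_id.sub continuous_const).abs)

lemma crescent_measurable (c c' r : ℝ) : MeasurableSet {z : ℝ | dL z c ≤ r ∧ r < dL z c'} := by
  rw [Set.setOf_and]
  exact (measurableSet_le (dL_continuous c).measurable measurable_const).inter
    (measurableSet_lt measurable_const (dL_continuous c').measurable)

end GBMAux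

/-- Lemma 4 of the paper: for two same-cluster vertices at
circular distance `x ≤ r_s` with `x + 2r_s ≤ 1`, the Motif-2 count among `m₁`
same-cluster points is `Bin(m₁, x)`-distributed and among `m₂` other-cluster
points it is `Bin(m₂, min(x, 2r_d))`-distributed. -/
theorem gbm_motif2_count_same (xu xv rs rd : ℝ) (m₁ m₂ : ℕ)
    (hxu : xu ∈ Set.Icc (0 : ℝ) 1) (hxv : xv ∈ Set.Icc (0 : ℝ) 1)
    (hrd : 0 ≤ rd) (hrsd : rd ≤ rs)
    (hx : dL xu xv ≤ rs) (hx1 : dL xu xv + 2 * rs ≤ 1) :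
    (∀ k : ℕ,
      ((Measure.pi fun _ : Fin m₁ => unif).prod (Measure.pi fun _ : Fin m₂ => unif))
        {ω | (Finset.univ.filter fun i : Fin m₁ =>
              dL (ω.1 i) xu ≤ rs ∧ rs < dL (ω.1 i) xv).card = k}
        = binomPMF m₁ (dL xu xv) k) ∧
    (∀ k : ℕ,
      ((Measure.pi fun _ : Fin m₁ => unif).prod (Measure.pi fun _ : Fin m₂ => unif))
        {ω | (Finset.univ.filter fun j : Fin m₂ =>
              dL (ω.2 j) xu ≤ rd ∧ rd < dL (ω.2 j) xv).card = k}
        = binomPMF m₂ (min (dL xu xv) (2 * rd)) k) := by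
  obtain ⟨hxu0, hxu1⟩ := id hxu
  obtain ⟨hxv0, hxv1⟩ := id hxv
  have hrs0 : (0:ℝ) ≤ rs := le_trans hrd hrsd
  have habs : |xu - xv| ≤ 1 := abs_le.mpr ⟨by linarith, by linarith⟩
  have hx0 : 0 ≤ dL xu xv := by
    unfold dL; exact le_min (abs_nonneg _) (by linarith [abs_le.mp habs])
  have hc1 := GBMAux.unif_crescent xu xv rs hxu hxv hrs0 hx1
  have hc2 := GBMAux.unif_crescent xu xv rd hxu hxv hrd (by linarith)
  rw [min_eq_left (by linarith : dL xu xv ≤ 2 * rs)] at hc1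
  constructor
  · intro k
    have hE : {ω : (Fin m₁ → ℝ) × (Fin m₂ → ℝ) |
        (Finset.univ.filter fun i : Fin m₁ =>
          dL (ω.1 i) xu ≤ rs ∧ rs < dL (ω.1 i) xv).card = k}
        = {f : Fin m₁ → ℝ | (Finset.univ.filter fun i : Fin m₁ =>
            dL (f i) xu ≤ rs ∧ rs < dL (f i) xv).card = k} ×ˢ Set.univ := by
      rw [Set.prod_univ]; rfl
    rw [hE, Measure.prod_prod, measure_univ, mul_one]
    exact GBMAux.binomial_count unif (fun z => dL z xu ≤ rs ∧ rs < dL z xv)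
      (GBMAux.crescent_measurable xu xv rs) (dL xu xv) hx0 (by linarith) hc1 m₁ k
  · intro k
    have hE : {ω : (Fin m₁ → ℝ) × (Fin m₂ → ℝ) |
        (Finset.univ.filter fun j : Fin m₂ =>
          dL (ω.2 j) xu ≤ rd ∧ rd < dL (ω.2 j) xv).card = k}
        = Set.univ ×ˢ {f : Fin m₂ → ℝ | (Finset.univ.filter fun j : Fin m₂ =>
            dL (f j) xu ≤ rd ∧ rd < dL (f j) xv).card = k} := by
      rw [Set.univ_prod]; rfl
    rw [hE, Measure.prod_prod, measure_univ, one_mul]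
    exact GBMAux.binomial_count unif (fun z => dL z xu ≤ rd ∧ rd < dL z xv)
      (GBMAux.crescent_measurable xu xv rd) (min (dL xu xv) (2 * rd))
      (le_min hx0 (by linarith)) (le_trans (min_le_left _ _) (by linarith)) hc2 m₂ k
end

section
/- Fix x_u, x_v ∈ [0,1] with x = d_L(x_u, x_v), let 0 ≤ r_d ≤ r_s with r_s > 2r_d, x ≤ r_d and x + 2r_s ≤ 1, and let Z_1, …, Z_{m₁} and W_1, …, W_{m₂} be i.i.d. uniform on [0,1]. Then: (i) the count #{i ≤ m₁ : d_L(Z_i, x_u) ≤ r_s and d_L(Z_i, x_v) > r_d} has the binomial distribution Bin(m₁, 2(r_s − r_d)); (ii) the count #{j ≤ m₂ : d_L(W_j, x_u) ≤ r_d and d_L(W_j, x_v) > r_s} is almost surely 0. -/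
open MeasureTheory

lemma dL_triangle {x y z : ℝ} (hx : x ∈ Set.Icc (0:ℝ) 1) (hy : y ∈ Set.Icc (0:ℝ) 1)
    (hz : z ∈ Set.Icc (0:ℝ) 1) : dL x z ≤ dL x y + dL y z := by
  obtain ⟨hx0, hx1⟩ := hx; obtain ⟨hy0, hy1⟩ := hy; obtain ⟨hz0, hz1⟩ := hz
  simp only [dL, min_def]
  split_ifs <;>
    rcases abs_cases (x-y) with ⟨e1,_⟩|⟨e1,_⟩ <;>
    rcases abs_cases (y-z) with ⟨e2,_⟩|⟨e2,_⟩ <;>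
    rcases abs_cases (x-z) with ⟨e3,_⟩|⟨e3,_⟩ <;>
    linarith

lemma dL_symm (x y : ℝ) : dL x y = dL y x := by
  simp [dL, abs_sub_comm]

lemma measurable_dL (c : ℝ) : Measurable fun z : ℝ => dL z c := by
  unfold dL; fun_prop

instance : IsProbabilityMeasure unif := by
  constructor
  rw [unif, Measure.restrict_apply_univ, Real.volume_Icc]
  norm_num

lemma ball_inter (c r : ℝ) (hc0 : 0 ≤ c) (hc1 : c ≤ 1) (hr : 0 ≤ r) (hr2 : 2*r ≤ 1) :
    {z : ℝ | dL z c ≤ r} ∩ Set.Icc 0 1 =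
      Set.Icc (max (c-r) 0) (min (c+r) 1) ∪ Set.Icc (c+1-r) 1 ∪ Set.Icc 0 (c+r-1) := by
  ext z
  simp only [Set.mem_inter_iff, Set.mem_setOf_eq, Set.mem_Icc, Set.mem_union, dL,
    min_le_iff, le_max_iff, max_le_iff, le_min_iff]
  constructor
  · rintro ⟨h | h, hz0, hz1⟩
    · rcases abs_cases (z - c) with ⟨e, _⟩ | ⟨e, _⟩
      · exact Or.inl (Or.inl ⟨⟨by linarith, hz0⟩, by linarith, hz1⟩)
      · exact Or.inl (Or.inl ⟨⟨by linarith, hz0⟩, by linarith, hz1⟩)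
    · rcases abs_cases (z - c) with ⟨e, _⟩ | ⟨e, _⟩
      · exact Or.inl (Or.inr ⟨by linarith, hz1⟩)
      · exact Or.inr ⟨hz0, by linarith⟩
  · rintro ((⟨⟨h1, hz0⟩, h2, hz1⟩ | ⟨h1, hz1⟩) | ⟨hz0, h1⟩)
    · refine ⟨Or.inl ?_, hz0, hz1⟩
      rcases abs_cases (z - c) with ⟨e, _⟩ | ⟨e, _⟩ <;> linarith
    · refine ⟨Or.inr ?_, by linarith, hz1⟩
      rcases abs_cases (z - c) with ⟨e, _⟩ | ⟨e, _⟩ <;> linarith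
    · refine ⟨Or.inr ?_, hz0, by linarith⟩
      rcases abs_cases (z - c) with ⟨e, _⟩ | ⟨e, _⟩ <;> linarith

lemma unif_ball (c r : ℝ) (hc0 : 0 ≤ c) (hc1 : c ≤ 1) (hr : 0 ≤ r) (hr2 : 2*r ≤ 1) :
    unif {z : ℝ | dL z c ≤ r} = ENNReal.ofReal (2*r) := by
  rw [unif, Measure.restrict_apply' measurableSet_Icc, ball_inter c r hc0 hc1 hr hr2]
  set P1 := Set.Icc (max (c-r) 0) (min (c+r) 1)
  set P2 := Set.Icc (c+1-r) 1
  set P3 := Set.Icc (0:ℝ) (c+r-1)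
  have h3 : volume P3 = ENNReal.ofReal (c+r-1) := by rw [Real.volume_Icc]; ring_nf
  have h2 : volume P2 = ENNReal.ofReal (r-c) := by rw [Real.volume_Icc]; ring_nf
  rcases le_or_gt c r with hcr | hcr
  · -- c ≤ r : pieces P1 = Icc 0 (c+r), P2 has length r-c, P3 null
    have hP1 : P1 = Set.Icc 0 (c+r) := by
      have : max (c-r) 0 = 0 := max_eq_right (by linarith)
      have h2 : min (c+r) 1 = c+r := min_eq_left (by linarith)
      show Set.Icc _ _ = _; rw [this, h2]
    have h3' : volume P3 = 0 := by rw [h3]; simp; linarith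
    have hle : volume (P1 ∪ P2 ∪ P3) ≤ ENNReal.ofReal (2*r) := by
      calc volume (P1 ∪ P2 ∪ P3) ≤ volume (P1 ∪ P2) + volume P3 := measure_union_le _ _
        _ = volume (P1 ∪ P2) := by rw [h3', add_zero]
        _ ≤ volume P1 + volume P2 := measure_union_le _ _
        _ = ENNReal.ofReal (c+r) + ENNReal.ofReal (r-c) := by
            rw [hP1, Real.volume_Icc, h2]; ring_nf
        _ = ENNReal.ofReal (2*r) := by
            rw [← ENNReal.ofReal_add (by linarith) (by linarith)]; ring_nf
    have hge : ENNReal.ofReal (2*r) ≤ volume (P1 ∪ P2 ∪ P3) := by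
      have hdisj : AEDisjoint volume P1 P2 := by
        have : P1 ∩ P2 ⊆ Set.Icc (c+1-r) (c+r) := fun z hz =>
          ⟨hz.2.1, (by rw [hP1] at hz; exact hz.1.2)⟩
        refine measure_mono_null this ?_
        rw [Real.volume_Icc]; simp; linarith
      have := measure_union₀ (measurableSet_Icc.nullMeasurableSet) hdisj
      calc ENNReal.ofReal (2*r)
          = ENNReal.ofReal (c+r) + ENNReal.ofReal (r-c) := by
            rw [← ENNReal.ofReal_add (by linarith) (by linarith)]; ring_nf
        _ = volume (P1 ∪ P2) := by
            rw [this, hP1, Real.volume_Icc, h2]; ring_nf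
        _ ≤ volume (P1 ∪ P2 ∪ P3) := measure_mono (Set.subset_union_left)
    exact le_antisymm hle hge
  · rcases le_or_gt c (1-r) with hcr2 | hcr2
    · -- middle case
      have hP1 : P1 = Set.Icc (c-r) (c+r) := by
        have ha : max (c-r) 0 = c-r := max_eq_left (by linarith)
        have hb : min (c+r) 1 = c+r := min_eq_left (by linarith)
        show Set.Icc _ _ = _; rw [ha, hb]
      have h2' : volume P2 = 0 := by rw [h2]; simp; linarith
      have h3' : volume P3 = 0 := by rw [h3]; simp; linarith
      have h1 : volume P1 = ENNReal.ofReal (2*r) := by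
        rw [hP1, Real.volume_Icc]; ring_nf
      refine le_antisymm ?_ ?_
      · calc volume (P1 ∪ P2 ∪ P3) ≤ volume (P1 ∪ P2) + volume P3 := measure_union_le _ _
          _ ≤ volume P1 + volume P2 + volume P3 := by gcongr; exact measure_union_le _ _
          _ = ENNReal.ofReal (2*r) := by rw [h1, h2', h3', add_zero, add_zero]
      · rw [← h1]; exact measure_mono (Set.subset_union_left.trans Set.subset_union_left)
    · -- c > 1-r : P1 = Icc (c-r) 1, P3 length c+r-1, P2 null
      have hP1 : P1 = Set.Icc (c-r) 1 := by
        have ha : max (c-r) 0 = c-r := max_eq_left (by linarith)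
        have hb : min (c+r) 1 = 1 := min_eq_right (by linarith)
        show Set.Icc _ _ = _; rw [ha, hb]
      have h2' : volume P2 = 0 := by rw [h2]; simp; linarith
      have hdisj : AEDisjoint volume P1 P3 := by
        have : P1 ∩ P3 ⊆ Set.Icc (c-r) (c+r-1) := fun z hz =>
          ⟨(by rw [hP1] at hz; exact hz.1.1), hz.2.2⟩
        refine measure_mono_null this ?_
        rw [Real.volume_Icc]; simp; linarith
      have hu : volume (P1 ∪ P3) = ENNReal.ofReal (2*r) := by
        rw [measure_union₀ (measurableSet_Icc.nullMeasurableSet) hdisj, hP1,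
          Real.volume_Icc, h3, ← ENNReal.ofReal_add (by linarith) (by linarith)]
        ring_nf
      refine le_antisymm ?_ ?_
      · calc volume (P1 ∪ P2 ∪ P3) ≤ volume (P1 ∪ P2) + volume P3 := measure_union_le _ _
          _ ≤ volume P1 + volume P2 + volume P3 := by gcongr; exact measure_union_le _ _
          _ = volume P1 + volume P3 := by rw [h2', add_zero]
          _ = volume (P1 ∪ P3) := (measure_union₀ (measurableSet_Icc.nullMeasurableSet) hdisj).symm
          _ = ENNReal.ofReal (2*r) := hu
      · rw [← hu]
        exact measure_mono (Set.union_subset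
          (Set.subset_union_left.trans Set.subset_union_left) Set.subset_union_right)

lemma dL_nonneg (x y : ℝ) (hx : x ∈ Set.Icc (0:ℝ) 1) (hy : y ∈ Set.Icc (0:ℝ) 1) :
    0 ≤ dL x y := by
  obtain ⟨a,b⟩ := hx; obtain ⟨c,d⟩ := hy
  rcases abs_cases (x-y) with ⟨e,_⟩|⟨e,_⟩ <;> simp only [dL, le_min_iff] <;>
    constructor <;> linarith

lemma unif_motifset (xu xv rs rd : ℝ)
    (hxu : xu ∈ Set.Icc (0 : ℝ) 1) (hxv : xv ∈ Set.Icc (0 : ℝ) 1)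
    (hrd : 0 ≤ rd) (hrsd : rd ≤ rs) (hrs2 : 2 * rd < rs)
    (hx : dL xu xv ≤ rd) (hx1 : dL xu xv + 2 * rs ≤ 1) :
    unif {z : ℝ | dL z xu ≤ rs ∧ rd < dL z xv} = ENNReal.ofReal (2 * (rs - rd)) := by
  have hd0 : 0 ≤ dL xu xv := dL_nonneg _ _ hxu hxv
  have hrs1 : 2 * rs ≤ 1 := by linarith
  have hrd1 : 2 * rd ≤ 1 := by linarith
  set I := Set.Icc (0:ℝ) 1 with hI
  have key : {z : ℝ | dL z xu ≤ rs ∧ rd < dL z xv} ∩ I =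
      ({z : ℝ | dL z xu ≤ rs} ∩ I) \ ({z : ℝ | dL z xv ≤ rd} ∩ I) := by
    ext z; constructor
    · rintro ⟨⟨h1, h2⟩, hzI⟩
      exact ⟨⟨h1, hzI⟩, fun hmem => absurd hmem.1 (not_le.mpr h2)⟩
    · rintro ⟨⟨h1, hzI⟩, hn⟩
      exact ⟨⟨h1, lt_of_not_ge fun hle => hn ⟨hle, hzI⟩⟩, hzI⟩
  have hsub : {z : ℝ | dL z xv ≤ rd} ∩ I ⊆ {z : ℝ | dL z xu ≤ rs} ∩ I := by
    rintro z ⟨hz, hzI⟩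
    refine ⟨?_, hzI⟩
    have := dL_triangle (x := z) (y := xv) (z := xu) hzI hxv hxu
    rw [dL_symm xv xu] at this
    simp only [Set.mem_setOf_eq] at hz ⊢
    linarith
  have hmeasv : MeasurableSet ({z : ℝ | dL z xv ≤ rd} ∩ I) :=
    ((measurable_dL xv) measurableSet_Iic).inter measurableSet_Icc
  have hBv : volume ({z : ℝ | dL z xv ≤ rd} ∩ I) = ENNReal.ofReal (2*rd) := by
    rw [← Measure.restrict_apply' measurableSet_Icc, ← unif]
    exact unif_ball xv rd hxv.1 hxv.2 hrd hrd1
  have hBu : volume ({z : ℝ | dL z xu ≤ rs} ∩ I) = ENNReal.ofReal (2*rs) := by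
    rw [← Measure.restrict_apply' measurableSet_Icc, ← unif]
    exact unif_ball xu rs hxu.1 hxu.2 (by linarith) hrs1
  rw [unif, Measure.restrict_apply' measurableSet_Icc, ← hI, key,
    measure_diff hsub hmeasv.nullMeasurableSet (by rw [hBv]; exact ENNReal.ofReal_ne_top),
    hBu, hBv, ← ENNReal.ofReal_sub _ (by linarith)]
  ring_nf

lemma pi_count_binomial {m : ℕ} (μ : Measure ℝ) [IsProbabilityMeasure μ]
    (P : ℝ → Prop) [DecidablePred P] (hA : MeasurableSet {z | P z}) {p : ℝ}
    (hp0 : 0 ≤ p) (hp1 : p ≤ 1)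
    (hp : μ {z | P z} = ENNReal.ofReal p) (k : ℕ) :
    (Measure.pi fun _ : Fin m => μ)
      {ω | (Finset.univ.filter fun i => P (ω i)).card = k} = binomPMF m p k := by
  set A := {z | P z} with hAdef
  have hAc : μ Aᶜ = ENNReal.ofReal (1 - p) := by
    rw [measure_compl hA (measure_ne_top _ _), measure_univ, hp,
      ENNReal.ofReal_sub _ hp0, ENNReal.ofReal_one]
  set CS : Finset (Fin m) → Set (Fin m → ℝ) :=
    fun S => Set.pi Set.univ (fun i => if i ∈ S then A else Aᶜ) with hCS
  have hCS_eq : ∀ S, CS S = {ω | Finset.univ.filter (fun i => P (ω i)) = S} := by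
    intro S
    ext ω
    simp only [hCS, Set.mem_pi, Set.mem_univ, forall_true_left, Set.mem_setOf_eq,
      Finset.ext_iff, Finset.mem_filter, Finset.mem_univ, true_and]
    constructor
    · intro h i; specialize h i; by_cases hi : i ∈ S <;>
        simp only [hi, if_true, if_false, Set.mem_compl_iff, hAdef, Set.mem_setOf_eq] at h <;>
        tauto
    · intro h i; specialize h i; by_cases hi : i ∈ S <;>
        simp only [hi, if_true, if_false, Set.mem_compl_iff, hAdef, Set.mem_setOf_eq] <;>
        tauto
  have hE : {ω : Fin m → ℝ | (Finset.univ.filter fun i => P (ω i)).card = k} =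
      ⋃ S ∈ Finset.powersetCard k (Finset.univ : Finset (Fin m)), CS S := by
    ext ω
    simp only [Set.mem_setOf_eq, Set.mem_iUnion, Finset.mem_powersetCard, exists_prop]
    constructor
    · intro h
      exact ⟨Finset.univ.filter fun i => P (ω i), ⟨Finset.subset_univ _, h⟩,
        by rw [hCS_eq]; exact rfl⟩
    · rintro ⟨S, ⟨-, hcard⟩, hω⟩
      rw [hCS_eq] at hω
      rw [Set.mem_setOf_eq.mp hω, hcard]
  have hmeas : ∀ S : Finset (Fin m), MeasurableSet (CS S) := by
    intro S
    apply MeasurableSet.univ_pi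
    intro i
    by_cases hi : i ∈ S <;> simp [hi, hA, hA.compl]
  have hdisj : (↑(Finset.powersetCard k (Finset.univ : Finset (Fin m))) :
      Set (Finset (Fin m))).PairwiseDisjoint CS := by
    intro S _ T _ hST
    rw [Function.onFun, Set.disjoint_left]
    intro ω hS hT
    rw [hCS_eq] at hS hT
    exact hST (hS.symm.trans hT)
  have hval : ∀ S ∈ Finset.powersetCard k (Finset.univ : Finset (Fin m)),
      (Measure.pi fun _ : Fin m => μ) (CS S)
        = ENNReal.ofReal p ^ k * ENNReal.ofReal (1 - p) ^ (m - k) := by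
    intro S hS
    rw [Finset.mem_powersetCard] at hS
    rw [hCS, Measure.pi_pi]
    have h1 : ∀ i : Fin m, μ (if i ∈ S then A else Aᶜ)
        = if i ∈ S then ENNReal.ofReal p else ENNReal.ofReal (1 - p) := by
      intro i; by_cases hi : i ∈ S <;> simp [hi, hp, hAc]
    rw [Finset.prod_congr rfl fun i _ => h1 i, Finset.prod_ite, Finset.prod_const,
      Finset.prod_const]
    congr 2
    · rw [Finset.filter_mem_eq_inter, Finset.univ_inter, hS.2]
    · rw [Finset.filter_not, Finset.filter_mem_eq_inter, Finset.univ_inter,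
        Finset.card_sdiff_of_subset (Finset.subset_univ S), Finset.card_univ, Fintype.card_fin, hS.2]
  rw [hE, measure_biUnion_finset hdisj (fun S _ => hmeas S),
    Finset.sum_congr rfl hval, Finset.sum_const, Finset.card_powersetCard,
    Finset.card_univ, Fintype.card_fin, nsmul_eq_mul, binomPMF]
  rw [ENNReal.ofReal_mul (by positivity), ENNReal.ofReal_mul (by norm_num),
    ENNReal.ofReal_natCast, ENNReal.ofReal_pow hp0, ENNReal.ofReal_pow (by linarith)]
  ring

/-- Lemma 5 of the paper: for two different-cluster vertices at
circular distance `x ≤ r_d` with `r_s > 2r_d` and `x + 2r_s ≤ 1`, the Motif-2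
count among the `m₁` points of `u`'s cluster is `Bin(m₁, 2(r_s − r_d))`-distributed,
and the count among the `m₂` points of `v`'s cluster is almost surely `0`. -/
theorem gbm_motif2_count_diff (xu xv rs rd : ℝ) (m₁ m₂ : ℕ)
    (hxu : xu ∈ Set.Icc (0 : ℝ) 1) (hxv : xv ∈ Set.Icc (0 : ℝ) 1)
    (hrd : 0 ≤ rd) (hrsd : rd ≤ rs) (hrs2 : 2 * rd < rs)
    (hx : dL xu xv ≤ rd) (hx1 : dL xu xv + 2 * rs ≤ 1) :
    (∀ k : ℕ,
      ((Measure.pi fun _ : Fin m₁ => unif).prod (Measure.pi fun _ : Fin m₂ => unif))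
        {ω | (Finset.univ.filter fun i : Fin m₁ =>
              dL (ω.1 i) xu ≤ rs ∧ rd < dL (ω.1 i) xv).card = k}
        = binomPMF m₁ (2 * (rs - rd)) k) ∧
    (∀ᵐ ω ∂((Measure.pi fun _ : Fin m₁ => unif).prod (Measure.pi fun _ : Fin m₂ => unif)),
      (Finset.univ.filter fun j : Fin m₂ =>
        dL (ω.2 j) xu ≤ rd ∧ rs < dL (ω.2 j) xv).card = 0) := by
  have hd0 : 0 ≤ dL xu xv := dL_nonneg _ _ hxu hxv
  constructor
  · intro k
    have hset : {ω : (Fin m₁ → ℝ) × (Fin m₂ → ℝ) | (Finset.univ.filter fun i : Fin m₁ =>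
          dL (ω.1 i) xu ≤ rs ∧ rd < dL (ω.1 i) xv).card = k} =
        {v : Fin m₁ → ℝ | (Finset.univ.filter fun i : Fin m₁ =>
          dL (v i) xu ≤ rs ∧ rd < dL (v i) xv).card = k} ×ˢ Set.univ := by
      ext ω; simp [Set.mem_prod]
    rw [hset, Measure.prod_prod, measure_univ, mul_one]
    exact pi_count_binomial unif (fun z => dL z xu ≤ rs ∧ rd < dL z xv)
      (((measurable_dL xu) measurableSet_Iic).inter ((measurable_dL xv) measurableSet_Ioi))
      (by linarith) (by linarith)
      (unif_motifset xu xv rs rd hxu hxv hrd hrsd hrs2 hx hx1) k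
  · have hae : ∀ j : Fin m₂,
        ∀ᵐ ω ∂((Measure.pi fun _ : Fin m₁ => unif).prod (Measure.pi fun _ : Fin m₂ => unif)),
          ω.2 j ∈ Set.Icc (0:ℝ) 1 := by
      intro j
      rw [ae_iff]
      have hset : {ω : (Fin m₁ → ℝ) × (Fin m₂ → ℝ) | ¬ ω.2 j ∈ Set.Icc (0:ℝ) 1} =
          Set.univ ×ˢ (Function.eval j ⁻¹' (Set.Icc (0:ℝ) 1)ᶜ) := by
        ext ω; simp [Function.eval]
      rw [hset, Measure.prod_prod, measure_univ, one_mul]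
      apply Measure.pi_eval_preimage_null
      rw [unif, Measure.restrict_apply' measurableSet_Icc]
      simp
    rw [← ae_all_iff] at hae
    filter_upwards [hae] with ω hω
    rw [Finset.card_eq_zero, Finset.filter_eq_empty_iff]
    rintro j -
    rintro ⟨h1, h2⟩
    have ht := dL_triangle (x := ω.2 j) (y := xu) (z := xv) (hω j) hxu hxv
    linarith
end

section
/- Let n ≥ 4 be a natural number and let r_s, r_d be real numbers with r_d ≥ 0 and (n − 4)·r_s > 4(n − 2)·r_d. Define μ_s(x) = n(r_s + r_d − x) − 4r_s + 2x for 0 ≤ x ≤ 2r_d and μ_s(x) = (n/2 − 2)(2r_s − x) for 2r_d < x ≤ r_s, and define μ_d = 2(n − 2)·r_d. Then μ_s(x) > μ_d for every x ∈ [0, r_s]. -/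
/-- mean separation for the triangle motif. For `n ≥ 4`,
`r_d ≥ 0` and `(n − 4)r_s > 4(n − 2)r_d`, the expected same-cluster common
neighbor count `μ_s(x)` exceeds the different-cluster one `μ_d = 2(n − 2)r_d`
for every `x ∈ [0, r_s]`. -/
theorem gbm_triangle_mean_separation (n : ℕ) (hn : 4 ≤ n) (rs rd : ℝ)
    (hrd : 0 ≤ rd) (h : 4 * ((n : ℝ) - 2) * rd < ((n : ℝ) - 4) * rs) :
    ∀ x ∈ Set.Icc (0 : ℝ) rs,
      2 * ((n : ℝ) - 2) * rd <
        (if x ≤ 2 * rd then (n : ℝ) * (rs + rd - x) - 4 * rs + 2 * x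
         else ((n : ℝ) / 2 - 2) * (2 * rs - x)) := by
  intro x hx
  obtain ⟨hx0, hxrs⟩ := hx
  have hn4 : (4 : ℝ) ≤ (n : ℝ) := by exact_mod_cast hn
  split_ifs with hc
  · nlinarith [mul_nonneg (sub_nonneg.2 hn4) hrd]
  · push_neg at hc
    nlinarith [mul_nonneg (sub_nonneg.2 hn4) hrd]
end

section
/- Let n ≥ 4 be a natural number and let r_s, r_d be real numbers with r_d > 0 and r_s ≥ 4r_d. Define μ_s(x) = (n − 2)·x for 0 ≤ x ≤ 2r_d and μ_s(x) = n·r_d + (n/2 − 2)·x for 2r_d < x ≤ r_s, and define μ_d = (n − 2)(r_s − r_d). Then μ_s(x) < μ_d for every x ∈ [0, r_s]. -/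
/-- mean separation for Motif 2. For `n ≥ 4`, `r_d > 0` and
`r_s ≥ 4r_d`, the expected same-cluster Motif-2 count `μ_s(x)` is below the
different-cluster one `μ_d = (n − 2)(r_s − r_d)` for every `x ∈ [0, r_s]`. -/
theorem gbm_motif2_mean_separation (n : ℕ) (hn : 4 ≤ n) (rs rd : ℝ)
    (hrd : 0 < rd) (h : 4 * rd ≤ rs) :
    ∀ x ∈ Set.Icc (0 : ℝ) rs,
      (if x ≤ 2 * rd then ((n : ℝ) - 2) * x
       else (n : ℝ) * rd + ((n : ℝ) / 2 - 2) * x) <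
        ((n : ℝ) - 2) * (rs - rd) := by
  intro x hx
  obtain ⟨hx0, hxr⟩ := hx
  have hn4 : (4 : ℝ) ≤ (n : ℝ) := by exact_mod_cast hn
  split_ifs with hc
  · nlinarith
  · push_neg at hc
    nlinarith
end

section
/- Let n ≥ 4 be a natural number and let r_s, r_d be real numbers with r_d > 0 and r_s ≥ 4r_d. Define μ_s(x) = (n/2 − 2)(1 − x − 2r_s) + (n/2)(1 − x − 2r_d) for 0 ≤ x ≤ 2r_d and μ_s(x) = (n/2 − 2)(1 − x − 2r_s) + (n/2)(1 − 4r_d) for 2r_d < x ≤ r_s, and define μ_d = (n − 2)(1 − 2r_s). Then μ_s(x) > μ_d for every x ∈ [0, r_s]. -/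
/-- mean separation for Motif 4. For `n ≥ 4`, `r_d > 0` and
`r_s ≥ 4r_d`, the expected same-cluster Motif-4 count `μ_s(x)` exceeds the
different-cluster one `μ_d = (n − 2)(1 − 2r_s)` for every `x ∈ [0, r_s]`. -/
theorem gbm_motif4_mean_separation (n : ℕ) (hn : 4 ≤ n) (rs rd : ℝ)
    (hrd : 0 < rd) (h : 4 * rd ≤ rs) :
    ∀ x ∈ Set.Icc (0 : ℝ) rs,
      ((n : ℝ) - 2) * (1 - 2 * rs) <
        (if x ≤ 2 * rd then
          ((n : ℝ) / 2 - 2) * (1 - x - 2 * rs) + ((n : ℝ) / 2) * (1 - x - 2 * rd)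
         else ((n : ℝ) / 2 - 2) * (1 - x - 2 * rs) + ((n : ℝ) / 2) * (1 - 4 * rd)) := by
  intro x hx
  obtain ⟨hx0, hxr⟩ := hx
  have hn' : (4 : ℝ) ≤ (n : ℝ) := by exact_mod_cast hn
  split_ifs with hc
  · nlinarith [mul_nonneg (by linarith : (0:ℝ) ≤ (n:ℝ)/2) (by linarith : (0:ℝ) ≤ 2*rs - 2*rd - 2*x)]
  · nlinarith [mul_nonneg (by linarith : (0:ℝ) ≤ (n:ℝ)/2) (by linarith : (0:ℝ) ≤ 2*rs - 4*rd - x)]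
end
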